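/- Let V be a grading-restricted vertex algebra. Then every element of the form [v]_{kl} with k, l ≥ 1 lying in the subspace of U^∞(V) generated by O^∞(V) and J^∞(V) satisfies the diagonal shift property, i.e., [v]_{k−1,l−1} ∈ Q^∞(V). -/

import Mathlib

noncomputable section

open scoped BigOperators

/-- The generalized binomial coefficient `C(m, k)` for `m : ℤ`, as a complex number. -/
def cchoose (m : ℤ) (k : ℕ) : ℂ :=
  (∏ i ∈ Finset.range k, ((m : ℂ) - (i : ℂ))) / (k.factorial : ℂ)

/-- A grading-restricted vertex algebra structure on a complex vector space `V`,
presented via the projections `proj n` onto the weight spaces `V_(n)` and the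
modes `mode u n = u_n` of the vertex operator `Y(u,x) = ∑ u_n x^{-n-1}`. -/
structure GRVertexAlgebra (V : Type) [AddCommGroup V] [Module ℂ V] : Type where
  /-- projection onto the weight-`n` subspace `V_(n)` -/
  proj : ℤ → V →ₗ[ℂ] V
  /-- `mode u n v = u_n v` -/
  mode : V → ℤ → V → V
  /-- the vacuum vector `𝟙` -/
  one : V
  mode_add_left : ∀ (u u' : V) (n : ℤ) (v : V),
    mode (u + u') n v = mode u n v + mode u' n v
  mode_smul_left : ∀ (c : ℂ) (u : V) (n : ℤ) (v : V),
    mode (c • u) n v = c • mode u n v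
  mode_add_right : ∀ (u : V) (n : ℤ) (v v' : V),
    mode u n (v + v') = mode u n v + mode u n v'
  mode_smul_right : ∀ (u : V) (n : ℤ) (c : ℂ) (v : V),
    mode u n (c • v) = c • mode u n v
  proj_idem : ∀ (m n : ℤ) (v : V), proj m (proj n v) = if m = n then proj n v else 0
  proj_support_finite : ∀ v : V, (Function.support fun n : ℤ => proj n v).Finite
  proj_sum : ∀ v : V, (∑ᶠ n : ℤ, proj n v) = v
  /-- each weight space is finite dimensional -/
  grading_finite_dim : ∀ n : ℤ, FiniteDimensional ℂ (LinearMap.range (proj n))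
  /-- the grading is bounded below -/
  grading_bounded_below : ∃ N : ℤ, ∀ n : ℤ, n < N → proj n = 0
  /-- lower truncation: `u_n v = 0` for `n` sufficiently large -/
  lower_trunc : ∀ u v : V, ∃ N : ℤ, ∀ n : ℤ, N ≤ n → mode u n v = 0
  /-- the vacuum is homogeneous of weight `0` -/
  one_homogeneous : proj 0 one = one
  /-- identity property `Y(𝟙,x) = 1` -/
  identity_prop : ∀ (n : ℤ) (v : V), mode one n v = if n = -1 then v else 0
  /-- creation property, regular part -/
  creation : ∀ (u : V) (n : ℤ), 0 ≤ n → mode u n one = 0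
  /-- creation property, constant term: `lim_{x→0} Y(u,x)𝟙 = u` -/
  creation_limit : ∀ u : V, mode u (-1) one = u
  /-- the Jacobi identity, in terms of modes -/
  jacobi : ∀ (a b c : V) (l m n : ℤ),
      (∑ᶠ i : ℕ, cchoose m i • mode (mode a (l + i) b) (m + n - i) c)
    = (∑ᶠ i : ℕ, ((-1 : ℂ) ^ (i : ℕ) * cchoose l i) • mode a (m + l - i) (mode b (n + i) c))
      - (∑ᶠ i : ℕ, ((-1 : ℂ) ^ (l + i : ℤ) * cchoose l i) •
          mode b (n + l - i) (mode a (m + i) c))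
  /-- `L(0)`-bracket formula, where `L(0) v = ∑ n • proj n v` -/
  L0_bracket : ∀ (a v : V) (n : ℤ),
      (∑ᶠ m : ℤ, (m : ℂ) • proj m (mode a n v)) - mode a n (∑ᶠ m : ℤ, (m : ℂ) • proj m v)
    = mode (∑ᶠ m : ℤ, (m : ℂ) • proj m a) n v + (-(n : ℂ) - 1) • mode a n v
  /-- `L(-1)`-derivative formula, where `L(-1) u = u_{-2} 𝟙`:
  `Y(L(-1)u, x) = (d/dx) Y(u,x)` -/
  Lneg1_deriv : ∀ (u v : V) (n : ℤ),
      mode (mode u (-2) one) n v = (-(n : ℂ)) • mode u (n - 1) v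
  /-- `L(-1)`-bracket formula: `[L(-1), Y(u,x)] = Y(L(-1)u, x)` -/
  Lneg1_bracket : ∀ (u v : V) (n : ℤ),
      mode (mode u n v) (-2) one - mode u n (mode v (-2) one)
    = mode (mode u (-2) one) n v

namespace GRVertexAlgebra

variable {V : Type} [AddCommGroup V] [Module ℂ V]

/-- The operator `L(0)`. -/
def L0op (VA : GRVertexAlgebra V) (v : V) : V := ∑ᶠ m : ℤ, (m : ℂ) • VA.proj m v

/-- The operator `L(-1)`. -/
def Lneg1op (VA : GRVertexAlgebra V) (v : V) : V := VA.mode v (-2) VA.one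

/-- `u` is homogeneous (of some weight). -/
def Homogeneous (VA : GRVertexAlgebra V) (u : V) : Prop := ∃ w : ℤ, VA.proj w u = u

lemma mode_zero_left (VA : GRVertexAlgebra V) (n : ℤ) (v : V) : VA.mode 0 n v = 0 := by
  simpa using VA.mode_smul_left 0 0 n v

lemma mode_zero_right (VA : GRVertexAlgebra V) (u : V) (n : ℤ) : VA.mode u n 0 = 0 := by
  simpa using VA.mode_smul_right u n 0 0

/-- `Res_x x^N (1+x)^{l + L(0)-weight} Y(u, x) v`, i.e. the residue
`Res_x x^N (1+x)^l Y((1+x)^{L(0)} u, x) v`, expressed in terms of modes and the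
homogeneous components of `u`. -/
def resPow (VA : GRVertexAlgebra V) (N l : ℤ) (u v : V) : V :=
  ∑ᶠ m : ℤ, ∑ᶠ i : ℕ, cchoose (l + m) i • VA.mode (VA.proj m u) (N + i) v

end GRVertexAlgebra

section UInf

variable (V : Type) [AddCommGroup V] [Module ℂ V]

/-- The space of column-finite `ℕ × ℕ` matrices with entries in `V`, as a submodule of
the space of all doubly indexed families. -/
def UInfSub : Submodule ℂ (ℕ → ℕ → V) where
  carrier := {A | ∀ l : ℕ, (Function.support fun k => A k l).Finite}
  add_mem' := by
    intro A B hA hB l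
    refine Set.Finite.subset ((hA l).union (hB l)) ?_
    intro k hk
    by_contra h
    simp only [Set.mem_union, Function.mem_support, not_or, not_not] at h
    exact hk (by simp [Pi.add_apply, h.1, h.2])
  zero_mem' := by
    intro l
    simp [Function.support]
  smul_mem' := by
    intro c A hA l
    refine Set.Finite.subset (hA l) ?_
    intro k hk
    by_contra h
    simp only [Function.mem_support, not_not] at h
    exact hk (by simp [Pi.smul_apply, h])

/-- `U^∞(V)`: column-finite `ℕ × ℕ` matrices with entries in `V`. -/
def UInf : Type := ↥(UInfSub V)

instance : AddCommGroup (UInf V) := by unfold UInf; infer_instance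
instance : Module ℂ (UInf V) := by unfold UInf; infer_instance

end UInf

namespace GRVertexAlgebra

variable {V : Type} [AddCommGroup V] [Module ℂ V]

/-- `[v]_{kl} = v ⊗ E_{kl}`, the matrix with entry `v` in position `(k,l)` and `0` elsewhere. -/
def Usingle (v : V) (k l : ℕ) : UInf V :=
  ⟨fun k' l' => if k' = k ∧ l' = l then v else 0, by
    intro l'
    refine Set.Finite.subset (Set.finite_singleton k) ?_
    intro k' hk'
    simp only [Function.mem_support] at hk'
    by_contra h
    simp only [Set.mem_singleton_iff] at h
    exact hk' (by simp [h])⟩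

/-- The `(k,l)` entry of the product `[u]_{kn} ⋄ [v]_{nl}`:
`∑_{m=0}^{n} C(-k+n-l-1, m) Res_x x^{-k+n-l-m-1} (1+x)^l Y((1+x)^{L(0)} u, x) v`. -/
def diamondEntry (VA : GRVertexAlgebra V) (u v : V) (k n l : ℕ) : V :=
  ∑ m ∈ Finset.range (n + 1),
    cchoose (-(k : ℤ) + n - l - 1) m • VA.resPow (-(k : ℤ) + n - l - m - 1) l u v

lemma resPow_zero_left (VA : GRVertexAlgebra V) (N l : ℤ) (v : V) :
    VA.resPow N l 0 v = 0 := by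
  unfold GRVertexAlgebra.resPow
  have h : ∀ m : ℤ, (∑ᶠ i : ℕ, cchoose (l + m) i • VA.mode (VA.proj m (0 : V)) (N + i) v) = 0 := by
    intro m
    have : ∀ i : ℕ, cchoose (l + m) i • VA.mode (VA.proj m (0 : V)) (N + i) v = 0 := by
      intro i
      rw [map_zero, VA.mode_zero_left]
      simp
    simp only [this]
    exact finsum_zero
  simp only [h]
  exact finsum_zero

lemma resPow_zero_right (VA : GRVertexAlgebra V) (N l : ℤ) (u : V) :
    VA.resPow N l u 0 = 0 := by
  unfold GRVertexAlgebra.resPow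
  have h : ∀ m : ℤ, (∑ᶠ i : ℕ, cchoose (l + m) i • VA.mode (VA.proj m u) (N + i) (0 : V)) = 0 := by
    intro m
    have : ∀ i : ℕ, cchoose (l + m) i • VA.mode (VA.proj m u) (N + i) (0 : V) = 0 := by
      intro i
      rw [VA.mode_zero_right]
      simp
    simp only [this]
    exact finsum_zero
  simp only [h]
  exact finsum_zero

lemma diamondEntry_zero_left (VA : GRVertexAlgebra V) (v : V) (k n l : ℕ) :
    VA.diamondEntry 0 v k n l = 0 := by
  unfold GRVertexAlgebra.diamondEntry
  simp [VA.resPow_zero_left]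

lemma diamondEntry_zero_right (VA : GRVertexAlgebra V) (u : V) (k n l : ℕ) :
    VA.diamondEntry u 0 k n l = 0 := by
  unfold GRVertexAlgebra.diamondEntry
  simp [VA.resPow_zero_right]

/-- The product `⋄` on `U^∞(V)`. -/
def udiamond (VA : GRVertexAlgebra V) (A B : UInf V) : UInf V :=
  ⟨fun k l => ∑ᶠ n : ℕ, VA.diamondEntry (A.1 k n) (B.1 n l) k n l, by
    intro l
    refine Set.Finite.subset
      (Set.Finite.biUnion (B.2 l) (fun n _ => A.2 n)) ?_
    intro k hk
    simp only [Function.mem_support] at hk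
    by_contra h
    apply hk
    have hterm : ∀ n : ℕ, VA.diamondEntry (A.1 k n) (B.1 n l) k n l = 0 := by
      intro n
      by_cases hB : B.1 n l = 0
      · rw [hB]; exact VA.diamondEntry_zero_right _ _ _ _
      · have hA : A.1 k n = 0 := by
          by_contra hA
          exact h (Set.mem_biUnion (by exact hB) (by exact hA))
        rw [hA]; exact VA.diamondEntry_zero_left _ _ _ _
    simp only [hterm]
    exact finsum_zero⟩

end GRVertexAlgebra
/-- A lower-bounded generalized module for a grading-restricted vertex algebra,
presented via the mode action `wmode`, the projections `wproj μ` onto the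
(generalized-eigenvalue) weight spaces `W_(μ)`, and the operators `L_W(0)`, `L_W(-1)`. -/
structure LBGModule {V : Type} [AddCommGroup V] [Module ℂ V]
    (VA : GRVertexAlgebra V) (W : Type) [AddCommGroup W] [Module ℂ W] : Type where
  /-- `wmode u n w = u_n w`, the modes of `Y_W(u,x) = ∑ u_n x^{-n-1}` -/
  wmode : V → ℤ → W → W
  /-- projection onto the weight-`μ` subspace `W_(μ)` -/
  wproj : ℂ → W →ₗ[ℂ] W
  /-- the operator `L_W(0)` -/
  LW0 : W →ₗ[ℂ] W
  /-- the operator `L_W(-1)` -/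
  LW1 : W →ₗ[ℂ] W
  wmode_add_left : ∀ (u u' : V) (n : ℤ) (w : W),
    wmode (u + u') n w = wmode u n w + wmode u' n w
  wmode_smul_left : ∀ (c : ℂ) (u : V) (n : ℤ) (w : W),
    wmode (c • u) n w = c • wmode u n w
  wmode_add_right : ∀ (u : V) (n : ℤ) (w w' : W),
    wmode u n (w + w') = wmode u n w + wmode u n w'
  wmode_smul_right : ∀ (u : V) (n : ℤ) (c : ℂ) (w : W),
    wmode u n (c • w) = c • wmode u n w
  wproj_idem : ∀ (μ ν : ℂ) (w : W), wproj μ (wproj ν w) = if μ = ν then wproj ν w else 0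
  wproj_support_finite : ∀ w : W, (Function.support fun μ : ℂ => wproj μ w).Finite
  wproj_sum : ∀ w : W, (∑ᶠ μ : ℂ, wproj μ w) = w
  /-- the grading is bounded below in real part -/
  grading_bounded_below : ∃ B : ℝ, ∀ μ : ℂ, μ.re < B → wproj μ = 0
  /-- lower truncation -/
  lower_trunc : ∀ (u : V) (w : W), ∃ N : ℤ, ∀ n : ℤ, N ≤ n → wmode u n w = 0
  /-- identity property `Y_W(𝟙,x) = 1` -/
  identity_prop : ∀ (n : ℤ) (w : W), wmode VA.one n w = if n = -1 then w else 0
  /-- the Jacobi identity for the module -/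
  jacobi : ∀ (a b : V) (w : W) (l m n : ℤ),
      (∑ᶠ i : ℕ, cchoose m i • wmode (VA.mode a (l + i) b) (m + n - i) w)
    = (∑ᶠ i : ℕ, ((-1 : ℂ) ^ (i : ℕ) * cchoose l i) • wmode a (m + l - i) (wmode b (n + i) w))
      - (∑ᶠ i : ℕ, ((-1 : ℂ) ^ (l + i : ℤ) * cchoose l i) •
          wmode b (n + l - i) (wmode a (m + i) w))
  /-- `W_(μ)` is the generalized eigenspace of `L_W(0)` with eigenvalue `μ` -/
  gen_eigenspace : ∀ (μ : ℂ) (w : W),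
    ∃ k : ℕ, (((LW0 - μ • LinearMap.id : Module.End ℂ W) ^ k) : W →ₗ[ℂ] W) (wproj μ w) = 0
  gen_eigenspace_mem : ∀ (μ : ℂ) (w : W),
    (∃ k : ℕ, (((LW0 - μ • LinearMap.id : Module.End ℂ W) ^ k) : W →ₗ[ℂ] W) w = 0) → wproj μ w = w
  /-- `L_W(0)`-bracket formula -/
  LW0_bracket : ∀ (a : V) (w : W) (n : ℤ),
      LW0 (wmode a n w) - wmode a n (LW0 w)
    = wmode (∑ᶠ m : ℤ, (m : ℂ) • VA.proj m a) n w + (-(n : ℂ) - 1) • wmode a n w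
  /-- `L_W(-1)`-derivative formula: `Y_W(L(-1)u, x) = (d/dx) Y_W(u,x)` -/
  LW1_deriv : ∀ (u : V) (w : W) (n : ℤ),
      wmode (VA.mode u (-2) VA.one) n w = (-(n : ℂ)) • wmode u (n - 1) w
  /-- `L_W(-1)`-bracket formula -/
  LW1_bracket : ∀ (u : V) (w : W) (n : ℤ),
      LW1 (wmode u n w) - wmode u n (LW1 w) = wmode (VA.mode u (-2) VA.one) n w

namespace LBGModule

variable {V : Type} [AddCommGroup V] [Module ℂ V] {VA : GRVertexAlgebra V}
variable {W : Type} [AddCommGroup W] [Module ℂ W]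

lemma wmode_zero_left (M : LBGModule VA W) (n : ℤ) (w : W) : M.wmode 0 n w = 0 := by
  simpa using M.wmode_smul_left 0 0 n w

lemma wmode_zero_right (M : LBGModule VA W) (u : V) (n : ℤ) : M.wmode u n 0 = 0 := by
  simpa using M.wmode_smul_right u n 0 0

/-- `Ω_n(W) = {w ∈ W : v_k w = 0 for homogeneous v with wt v - k - 1 < -n}`
(for `n < 0` this is automatically `{0}`, matching `Ω_{-1}(W) = 0`). -/
def OmegaSet (M : LBGModule VA W) (n : ℤ) : Set W :=
  {w : W | ∀ (m k : ℤ) (v : V), m - k - 1 < -n → M.wmode (VA.proj m v) k w = 0}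

/-- `ϑ_{Gr(W)}([v]_{kl})` applied to a representative `w`:
`Res_x x^{l-k-1} Y_W(x^{L(0)} v, x) w`. -/
def wAct (M : LBGModule VA W) (v : V) (k l : ℕ) (w : W) : W :=
  ∑ᶠ m : ℤ, M.wmode (VA.proj m v) ((l : ℤ) - (k : ℤ) - 1 + m) w

end LBGModule

namespace GRVertexAlgebra

variable {V : Type} [AddCommGroup V] [Module ℂ V]

/-- Membership in `Q^∞(V)`: `A` acts as zero on `Gr(W)` for every lower-bounded
generalized `V`-module `W`.  Here the action of `A` on `[w]_n ∈ Gr_n(W)` has component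
`[ϑ([A_{kn}]_{kn}) w]_k` in `Gr_k(W)`, which vanishes in `Gr_k(W) = Ω_k(W)/Ω_{k-1}(W)`
exactly when the representative lies in `Ω_{k-1}(W)`. -/
def memQ (VA : GRVertexAlgebra V) (A : UInf V) : Prop :=
  ∀ (W : Type) (_ : AddCommGroup W) (_ : Module ℂ W) (M : LBGModule VA W)
    (n k : ℕ) (w : W), w ∈ M.OmegaSet n →
      M.wAct (A.1 k n) k n w ∈ M.OmegaSet ((k : ℤ) - 1)

/-- The generators of `O^∞_∘(V)` living in position `(k,l)`:
`Res_x x^{-k-l-p-2} (1+x)^l Y((1+x)^{L(0)} u, x) v`. -/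
def circExpr (VA : GRVertexAlgebra V) (u v : V) (k l p : ℕ) : V :=
  VA.resPow (-(k : ℤ) - l - p - 2) l u v

/-- Membership in `O^∞_∘(V)`: each entry of `A` is a (finite) linear combination of the
generators `Res_x x^{-k-l-p-2} (1+x)^l [Y((1+x)^{L(0)} u, x) v]_{kl}`; since each generator
is concentrated in a single position `(k,l)`, an infinite linear combination in which each
pair `(k,l)` appears only finitely many times is exactly a column-finite matrix each of whose
entries lies in the corresponding span. -/
def memOcirc (VA : GRVertexAlgebra V) (A : UInf V) : Prop :=
  ∀ k l : ℕ, A.1 k l ∈ Submodule.span ℂ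
    {x : V | ∃ (u v : V) (p : ℕ), x = VA.circExpr u v k l p}

/-- The element `(L(-1) + L(0) + l - k) v`. -/
def LLExpr (VA : GRVertexAlgebra V) (k l : ℕ) (v : V) : V :=
  VA.Lneg1op v + VA.L0op v + (((l : ℂ) - (k : ℂ)) • v)

/-- Membership in `O^∞(V)`. -/
def memO (VA : GRVertexAlgebra V) (A : UInf V) : Prop :=
  ∀ k l : ℕ, A.1 k l ∈ Submodule.span ℂ
    ({x : V | ∃ (u v : V) (p : ℕ), x = VA.circExpr u v k l p}
      ∪ {x : V | ∃ v : V, x = VA.LLExpr k l v})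

end GRVertexAlgebra
namespace GRVertexAlgebra

variable {V : Type} [AddCommGroup V] [Module ℂ V]

/-- Huang's Jacobi-identity element of `U^∞(V)` attached to `u, v ∈ V` with `v`
homogeneous of weight `wtv`, and integers `k ∈ ℕ`, `l, p, n ∈ ℤ` with `l + p ∈ ℕ`:
`∑_{j, n+p-j ≥ 0} (-1)^j C(p,j) [v]_{k,n+p-j} ⋄ [u]_{n+p-j,l+p}`
`- ∑_{j, l-n+k+p-j ≥ 0} (-1)^{p-j} C(p,j) [u]_{k,l-n+k+p-j} ⋄ [v]_{l-n+k+p-j,l+p}`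
`- ∑_{j ∈ ℕ} C(wt v + n - k - 1, j) [v_{p+j} u]_{k,l+p}`. -/
def jElt (VA : GRVertexAlgebra V) (u v : V) (wtv : ℤ) (k : ℕ) (l p n : ℤ) : UInf V :=
  (∑ᶠ j : ℕ, if (j : ℤ) ≤ n + p then
      ((-1 : ℂ) ^ (j : ℕ) * cchoose p j) •
        VA.udiamond (Usingle v k (n + p - j).toNat)
          (Usingle u (n + p - j).toNat (l + p).toNat)
    else 0)
  - (∑ᶠ j : ℕ, if (j : ℤ) ≤ l - n + (k : ℤ) + p then
      ((-1 : ℂ) ^ ((p : ℤ) - (j : ℤ)) * cchoose p j) •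
        VA.udiamond (Usingle u k (l - n + (k : ℤ) + p - j).toNat)
          (Usingle v (l - n + (k : ℤ) + p - j).toNat (l + p).toNat)
    else 0)
  - Usingle (∑ᶠ j : ℕ, cchoose (wtv + n - (k : ℤ) - 1) j • VA.mode v (p + j) u)
      k (l + p).toNat

/-- The `(k, l+p)` entry of the Jacobi-identity element `jElt`, written out in terms of
residues as in the paper. -/
def jEntry (VA : GRVertexAlgebra V) (u v : V) (wtv : ℤ) (k : ℕ) (l p n : ℤ) : V :=
  (∑ᶠ j : ℕ, if (j : ℤ) ≤ n + p then
      ((-1 : ℂ) ^ (j : ℕ) * cchoose p j) •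
        VA.diamondEntry v u k (n + p - j).toNat (l + p).toNat
    else 0)
  - (∑ᶠ j : ℕ, if (j : ℤ) ≤ l - n + (k : ℤ) + p then
      ((-1 : ℂ) ^ ((p : ℤ) - (j : ℤ)) * cchoose p j) •
        VA.diamondEntry u v k (l - n + (k : ℤ) + p - j).toNat (l + p).toNat
    else 0)
  - (∑ᶠ j : ℕ, cchoose (wtv + n - (k : ℤ) - 1) j • VA.mode v (p + j) u)

/-- The set of generating elements of `J^∞(V)`. -/
def JSet (VA : GRVertexAlgebra V) : Set (UInf V) :=
  {A : UInf V | ∃ (u v : V) (wtv : ℤ) (k : ℕ) (l p n : ℤ),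
    VA.proj wtv v = v ∧ 0 ≤ l + p ∧ A = VA.jElt u v wtv k l p n}

/-- The set `O^∞(V)` of Huang, as a subset of `U^∞(V)`. -/
def OSet (VA : GRVertexAlgebra V) : Set (UInf V) := {A : UInf V | VA.memO A}

end GRVertexAlgebra

/-- A vertex operator algebra: a grading-restricted vertex algebra together with a
conformal vector `ω` whose modes `L(n) = ω_{n+1}` give a representation of the Virasoro
algebra, recover the grading operator `L(0)`, and satisfy the `L(-1)`-property. -/
structure VertexOperatorAlgebra (V : Type) [AddCommGroup V] [Module ℂ V]
    extends GRVertexAlgebra V : Type where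
  /-- the conformal vector -/
  omega : V
  /-- the central charge -/
  centralCharge : ℂ
  /-- the Virasoro relations for `L(n) = ω_{n+1}` -/
  virasoro : ∀ (m n : ℤ) (v : V),
      mode omega (m + 1) (mode omega (n + 1) v) - mode omega (n + 1) (mode omega (m + 1) v)
    = ((m : ℂ) - (n : ℂ)) • mode omega (m + n + 1) v
      + (if m + n = 0 then (((m ^ 3 - m : ℤ) : ℂ) / 12) * centralCharge else 0) • v
  /-- `L(0) = ω_1` is the grading operator -/
  omega_L0 : ∀ v : V, mode omega 1 v = ∑ᶠ m : ℤ, (m : ℂ) • proj m v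
  /-- `L(-1) = ω_0` -/
  omega_Lneg1 : ∀ v : V, mode omega 0 v = mode v (-2) one

namespace GRVertexAlgebra

variable {V : Type} [AddCommGroup V] [Module ℂ V]

/-- The circle product `u ∘_n v = Res_x (1+x)^{wt u + n} Y(u,x) v / x^{2n+2}`
(for `u` homogeneous; `resPow` inserts the weight of each homogeneous component). -/
def circN (VA : GRVertexAlgebra V) (n : ℕ) (u v : V) : V :=
  VA.resPow (-(2 * (n : ℤ)) - 2) n u v

/-- The subspace `O_n(V)`, spanned by the `u ∘_n v` for homogeneous `u` and all `v`, and
by the `(L(-1) + L(0)) v`. -/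
def ZhuO (VA : GRVertexAlgebra V) (n : ℕ) : Submodule ℂ V :=
  Submodule.span ℂ
    ({x : V | ∃ u v : V, VA.Homogeneous u ∧ x = VA.circN n u v}
      ∪ {x : V | ∃ v : V, x = VA.Lneg1op v + VA.L0op v})

/-- The product `u *_n v` of Dong–Li–Mason (for `u` homogeneous, extended linearly):
`∑_{m=0}^{n} (-1)^m C(m+n, n) Res_x (1+x)^{wt u + n} Y(u,x) v / x^{n+m+1}`. -/
def starN (VA : GRVertexAlgebra V) (n : ℕ) (u v : V) : V :=
  ∑ m ∈ Finset.range (n + 1),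
    ((-1 : ℂ) ^ (m : ℕ) * ((m + n).choose n : ℂ)) •
      VA.resPow (-(n : ℤ) - m - 1) n u v

end GRVertexAlgebra

/-- The monomial `α(-i_1) ⋯ α(-i_j) 𝟙` of the rank one Heisenberg vertex operator algebra,
indexed by the multiset `{i_1, …, i_j}` of positive integers; here `a = α(-1)𝟙` so that
`α(m) = a_m`. -/
def heisMono {V : Type} [AddCommGroup V] [Module ℂ V]
    (VA : GRVertexAlgebra V) (a : V) (μ : Multiset ℕ+) : V :=
  (μ.sort (· ≤ ·)).foldr (fun i v => VA.mode a (-(i : ℤ)) v) VA.one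

/-- The rank one Heisenberg vertex operator algebra `M(1)`: a vertex operator algebra
with a weight-one element `a = α(-1)𝟙` whose modes `α(m) = a_m` satisfy the rank one
Heisenberg relations (with the central element acting as `1`), such that the monomials
`α(-i_1) ⋯ α(-i_j) 𝟙` form a basis, and with conformal vector `ω = (1/2) α(-1)² 𝟙`
of central charge `1`. -/
structure HeisenbergVOA (V : Type) [AddCommGroup V] [Module ℂ V]
    extends VertexOperatorAlgebra V : Type where
  /-- the element `a = α(-1)𝟙` -/
  a : V
  /-- `α(-1)𝟙` is homogeneous of weight one -/
  a_wt : proj 1 a = a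
  /-- the Heisenberg commutation relations `[α(m), α(n)] = m δ_{m+n,0}` (`c` acts as `1`) -/
  heis_comm : ∀ (m n : ℤ) (v : V),
      mode a m (mode a n v) - mode a n (mode a m v)
    = if m + n = 0 then (m : ℂ) • v else 0
  /-- `M(1) ≃ S(ĥ⁻)` linearly: the monomials `α(-i_1)⋯α(-i_j)𝟙` form a basis -/
  basis : Module.Basis (Multiset ℕ+) ℂ V
  basis_eq : ∀ μ : Multiset ℕ+, basis μ = heisMono toGRVertexAlgebra a μ
  omega_eq : omega = (1 / 2 : ℂ) • mode a (-1) a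
  centralCharge_eq : centralCharge = 1

namespace HeisenbergVOA

variable {V : Type} [AddCommGroup V] [Module ℂ V]

/-- The element
`D_n = [α(-1)𝟙]_{nn} ⋄ [α(-1)𝟙]_{nn} - [α(-1)²𝟙]_{nn} + 2n [𝟙]_{nn}` of `U^∞(M(1))`. -/
def Delt (H : HeisenbergVOA V) (n : ℕ) : UInf V :=
  H.udiamond (GRVertexAlgebra.Usingle H.a n n) (GRVertexAlgebra.Usingle H.a n n)
    - GRVertexAlgebra.Usingle (H.mode H.a (-1) H.a) n n
    + (2 * (n : ℂ)) • GRVertexAlgebra.Usingle H.one n n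

end HeisenbergVOA

namespace LBGModule

variable {V : Type} [AddCommGroup V] [Module ℂ V]
variable {W : Type} [AddCommGroup W] [Module ℂ W]

/-- `Ω(W) = {w ∈ W : α(n) w = 0 for all n > 0}` for a module `W` over the rank one
Heisenberg vertex operator algebra. -/
def smallOmega (H : HeisenbergVOA V) (M : LBGModule H.toGRVertexAlgebra W) :
    Submodule ℂ W where
  carrier := {w : W | ∀ n : ℤ, 0 < n → M.wmode H.a n w = 0}
  add_mem' := by
    intro w w' hw hw' n hn
    rw [M.wmode_add_right, hw n hn, hw' n hn, add_zero]
  zero_mem' := fun n _ => M.wmode_zero_right H.a n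
  smul_mem' := by
    intro c w hw n hn
    rw [M.wmode_smul_right, hw n hn, smul_zero]

end LBGModule
/- ===================== Auxiliary development for the diagonal shift ===================== -/

section DShiftAux

open Function GRVertexAlgebra

/-- Linear maps commute with finsum (finite support). -/
lemma lmap_finsum {ι : Type} {A B : Type} [AddCommMonoid A] [AddCommMonoid B]
    [Module ℂ A] [Module ℂ B] (g : A →ₗ[ℂ] B) (f : ι → A)
    (hf : (Function.support f).Finite) : g (∑ᶠ i, f i) = ∑ᶠ i, g (f i) := by
  simpa using AddMonoidHom.map_finsum g.toAddMonoidHom hf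

/-- Swapping two finsums given uniform finite bounds for the supports. -/
lemma finsum_swap {ι κ : Type} {A : Type} [AddCommMonoid A] (f : ι → κ → A)
    (S : Finset ι) (T : Finset κ) (h : ∀ i j, f i j ≠ 0 → i ∈ S ∧ j ∈ T) :
    ∑ᶠ i, ∑ᶠ j, f i j = ∑ᶠ j, ∑ᶠ i, f i j := by
  have e1 : ∀ i, (∑ᶠ j, f i j) = ∑ j ∈ T, f i j := fun i =>
    finsum_eq_sum_of_support_subset _ (fun j hj => (h i j hj).2)
  have e2 : ∀ j, (∑ᶠ i, f i j) = ∑ i ∈ S, f i j := fun j =>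
    finsum_eq_sum_of_support_subset _ (fun i hi => (h i j hi).1)
  rw [finsum_congr e1, finsum_congr e2]
  rw [finsum_eq_sum_of_support_subset _ (s := S) (fun i hi => by
    simp only [Function.mem_support] at hi
    by_contra hiS
    exact hi (Finset.sum_eq_zero fun j _ => by
      by_contra hz
      exact hiS (h i j hz).1))]
  rw [finsum_eq_sum_of_support_subset _ (s := T) (fun j hj => by
    simp only [Function.mem_support] at hj
    by_contra hjT
    exact hj (Finset.sum_eq_zero fun i _ => by
      by_contra hz
      exact hjT (h i j hz).2))]
  exact Finset.sum_comm

lemma cchoose_zero' (m : ℤ) : cchoose m 0 = 1 := by simp [cchoose]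

lemma cfac_ne (n : ℕ) : ((n.factorial : ℂ)) ≠ 0 :=
  Nat.cast_ne_zero.mpr (Nat.factorial_ne_zero n)

/-- The trinomial revision identity for generalized binomial coefficients. -/
lemma cchoose_trinomial (A : ℤ) (a b : ℕ) :
    cchoose A a * cchoose (A - a) b = cchoose A (a + b) * ((a + b).choose a : ℂ) := by
  have hprod : (∏ i ∈ Finset.range (a + b), ((A : ℂ) - i)) =
      (∏ i ∈ Finset.range a, ((A : ℂ) - i)) *
        ∏ i ∈ Finset.range b, (((A - a : ℤ) : ℂ) - i) := by
    rw [Finset.prod_range_add]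
    congr 1
    refine Finset.prod_congr rfl fun i _ => ?_
    push_cast
    ring
  have hfacN : (a + b).choose a * a.factorial * b.factorial = (a + b).factorial := by
    have h0 := Nat.add_choose_mul_factorial_mul_factorial b a
    rw [Nat.add_comm a b, mul_right_comm]
    exact h0
  have hfac : ((a + b).choose a : ℂ) * (a.factorial : ℂ) * (b.factorial : ℂ)
      = ((a + b).factorial : ℂ) := by exact_mod_cast congrArg (Nat.cast : ℕ → ℂ) hfacN
  unfold cchoose
  rw [hprod, div_mul_div_comm, div_mul_eq_mul_div, div_eq_div_iff
    (mul_ne_zero (cfac_ne a) (cfac_ne b)) (cfac_ne (a + b))]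
  linear_combination (-((∏ i ∈ Finset.range a, ((A : ℂ) - i)) *
    ∏ i ∈ Finset.range b, (((A - a : ℤ) : ℂ) - i))) * hfac

/-- Alternating sum of binomial coefficients. -/
lemma alt_sum_choose (s : ℕ) :
    (∑ m ∈ Finset.range (s + 1), ((-1 : ℂ) ^ (s - m) * (s.choose m : ℂ)))
      = if s = 0 then 1 else 0 := by
  have h := add_pow (1 : ℂ) (-1) s
  have h0 : ((1 : ℂ) + -1) = 0 := by norm_num
  rw [h0] at h
  calc (∑ m ∈ Finset.range (s + 1), ((-1 : ℂ) ^ (s - m) * (s.choose m : ℂ)))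
      = ∑ m ∈ Finset.range (s + 1), (1 : ℂ) ^ m * (-1 : ℂ) ^ (s - m) * (s.choose m : ℂ) := by
        refine Finset.sum_congr rfl fun m _ => by ring
    _ = (0 : ℂ) ^ s := h.symm
    _ = if s = 0 then 1 else 0 := by
        by_cases hs : s = 0
        · simp [hs]
        · simp [hs, zero_pow hs]

/-- Collapse of the double binomial sum. -/
lemma coeff_collapse (A : ℤ) (s : ℕ) :
    (∑ m ∈ Finset.range (s + 1),
        cchoose A m * ((-1 : ℂ) ^ (s - m) * cchoose (A - m) (s - m)))
      = if s = 0 then 1 else 0 := by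
  have h1 : ∀ m ∈ Finset.range (s + 1),
      cchoose A m * ((-1 : ℂ) ^ (s - m) * cchoose (A - m) (s - m))
        = cchoose A s * ((-1 : ℂ) ^ (s - m) * (s.choose m : ℂ)) := by
    intro m hm
    have hm' : m ≤ s := Nat.lt_succ_iff.mp (Finset.mem_range.mp hm)
    have htri := cchoose_trinomial A m (s - m)
    rw [Nat.add_sub_cancel' hm'] at htri
    calc cchoose A m * ((-1 : ℂ) ^ (s - m) * cchoose (A - m) (s - m))
        = (-1 : ℂ) ^ (s - m) * (cchoose A m * cchoose (A - m) (s - m)) := by ring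
      _ = (-1 : ℂ) ^ (s - m) * (cchoose A s * (s.choose m : ℂ)) := by rw [htri]
      _ = cchoose A s * ((-1 : ℂ) ^ (s - m) * (s.choose m : ℂ)) := by ring
  rw [Finset.sum_congr rfl h1, ← Finset.mul_sum, alt_sum_choose]
  by_cases hs : s = 0
  · subst hs; simp [cchoose_zero']
  · simp [hs]

/-- The key combinatorial collapse: a double binomial sum against a cut-off function. -/
lemma key_collapse {W : Type} [AddCommGroup W] [Module ℂ W]
    (A : ℤ) (q : ℕ) (g : ℕ → W) (hg : ∀ s, q ≤ s → g s = 0) :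
    (∑ m ∈ Finset.range (q + 1), cchoose A m •
        ∑ i ∈ Finset.range (q + 1), ((-1 : ℂ) ^ i * cchoose (A - m) i) • g (m + i))
      = g 0 := by
  classical
  have step1 : (∑ m ∈ Finset.range (q + 1), cchoose A m •
        ∑ i ∈ Finset.range (q + 1), ((-1 : ℂ) ^ i * cchoose (A - m) i) • g (m + i))
      = ∑ p ∈ Finset.range (q + 1) ×ˢ Finset.range (q + 1),
          (cchoose A p.1 * ((-1 : ℂ) ^ p.2 * cchoose (A - p.1) p.2)) • g (p.1 + p.2) := by
    rw [Finset.sum_product]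
    refine Finset.sum_congr rfl fun m _ => ?_
    rw [Finset.smul_sum]
    refine Finset.sum_congr rfl fun i _ => ?_
    rw [smul_smul]
  rw [step1]
  have step2 : (∑ p ∈ Finset.range (q + 1) ×ˢ Finset.range (q + 1),
          (cchoose A p.1 * ((-1 : ℂ) ^ p.2 * cchoose (A - p.1) p.2)) • g (p.1 + p.2))
      = ∑ p ∈ (Finset.range (q + 1) ×ˢ Finset.range (q + 1)).filter
          (fun p => p.1 + p.2 < q),
          (cchoose A p.1 * ((-1 : ℂ) ^ p.2 * cchoose (A - p.1) p.2)) • g (p.1 + p.2) := by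
    symm
    apply Finset.sum_subset (Finset.filter_subset _ _)
    intro p hp hnp
    simp only [Finset.mem_filter, not_and, not_lt] at hnp
    rw [hg (p.1 + p.2) (hnp hp), smul_zero]
  rw [step2]
  have step3 : (∑ p ∈ (Finset.range (q + 1) ×ˢ Finset.range (q + 1)).filter
          (fun p => p.1 + p.2 < q),
          (cchoose A p.1 * ((-1 : ℂ) ^ p.2 * cchoose (A - p.1) p.2)) • g (p.1 + p.2))
      = ∑ x ∈ (Finset.range q).sigma (fun s => Finset.range (s + 1)),
          (cchoose A x.2 * ((-1 : ℂ) ^ (x.1 - x.2) * cchoose (A - x.2) (x.1 - x.2)))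
            • g x.1 := by
    apply Finset.sum_nbij' (i := fun p => (⟨p.1 + p.2, p.1⟩ : Σ _ : ℕ, ℕ))
      (j := fun x => ((x.2, x.1 - x.2) : ℕ × ℕ))
    · rintro ⟨m, i⟩ hp
      simp only [Finset.mem_filter, Finset.mem_product, Finset.mem_range] at hp
      refine Finset.mem_sigma.mpr ⟨Finset.mem_range.mpr ?_, Finset.mem_range.mpr ?_⟩
      · show m + i < q
        omega
      · show m < m + i + 1
        omega
    · rintro ⟨s, m⟩ hx
      simp only [Finset.mem_sigma, Finset.mem_range] at hx
      simp only [Finset.mem_filter, Finset.mem_product, Finset.mem_range]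
      omega
    · rintro ⟨m, i⟩ hp
      simp only [Finset.mem_filter, Finset.mem_product, Finset.mem_range] at hp
      show ((m, m + i - m) : ℕ × ℕ) = (m, i)
      rw [show m + i - m = i from by omega]
    · rintro ⟨s, m⟩ hx
      simp only [Finset.mem_sigma, Finset.mem_range] at hx
      have e1 : m + (s - m) = s := by omega
      simp only []
      rw [show ((⟨m + (s - m), m⟩ : Σ _ : ℕ, ℕ)) = (⟨s, m⟩ : Σ _ : ℕ, ℕ) from by rw [e1]]
    · rintro ⟨m, i⟩ hp
      simp only [Finset.mem_filter, Finset.mem_product, Finset.mem_range] at hp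
      have e1 : m + i - m = i := by omega
      simp only [e1]
  rw [step3, Finset.sum_sigma]
  have step4 : ∀ s ∈ Finset.range q,
      (∑ m ∈ Finset.range (s + 1),
          (cchoose A m * ((-1 : ℂ) ^ (s - m) * cchoose (A - m) (s - m))) • g s)
        = (if s = 0 then (1 : ℂ) else 0) • g s := by
    intro s _
    rw [← Finset.sum_smul, coeff_collapse]
  rw [Finset.sum_congr rfl step4]
  simp only [ite_smul, one_smul, zero_smul]
  rw [Finset.sum_ite_eq' (Finset.range q) 0 g]
  by_cases hq : q = 0
  · subst hq
    simp [hg 0 le_rfl]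
  · rw [if_pos (Finset.mem_range.mpr (Nat.pos_of_ne_zero hq))]

end DShiftAux
section DShiftAux2

open Function GRVertexAlgebra

variable {V : Type} [AddCommGroup V] [Module ℂ V]

lemma proj_proj_self (VA : GRVertexAlgebra V) {x : V} {β : ℤ} (h : VA.proj β x = x)
    {m : ℤ} (hm : m ≠ β) : VA.proj m x = 0 := by
  conv_lhs => rw [← h]
  rw [VA.proj_idem, if_neg hm]

lemma proj_support_smul (VA : GRVertexAlgebra V) (x : V) (c : ℤ → ℂ) :
    (Function.support fun m : ℤ => c m • VA.proj m x).Finite :=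
  (VA.proj_support_finite x).subset (fun m hm => by
    simp only [Function.mem_support] at hm ⊢
    intro h0
    rw [h0, smul_zero] at hm
    exact hm rfl)

lemma L0op_eq_smul_of_proj (VA : GRVertexAlgebra V) {x : V} {β : ℤ}
    (h : VA.proj β x = x) : VA.L0op x = ((β : ℂ)) • x := by
  unfold GRVertexAlgebra.L0op
  rw [finsum_eq_single _ β (fun m hm => by
    rw [proj_proj_self VA h hm, smul_zero]), h]

lemma proj_L0op (VA : GRVertexAlgebra V) (x : V) (m : ℤ) :
    VA.proj m (VA.L0op x) = (m : ℂ) • VA.proj m x := by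
  unfold GRVertexAlgebra.L0op
  rw [lmap_finsum (VA.proj m) _ (proj_support_smul VA x _)]
  rw [finsum_eq_single _ m (fun n hn => by
    rw [map_smul, VA.proj_idem, if_neg (Ne.symm hn), smul_zero])]
  rw [map_smul, VA.proj_idem, if_pos rfl]

lemma proj_of_eigen (VA : GRVertexAlgebra V) {x : V} {c : ℤ}
    (h : VA.L0op x = ((c : ℤ) : ℂ) • x) (m : ℤ) :
    VA.proj m x = if m = c then x else 0 := by
  have hsm : ∀ n : ℤ, (n : ℂ) • VA.proj n x = (c : ℂ) • VA.proj n x := by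
    intro n
    have h1 := proj_L0op VA x n
    rw [h, map_smul] at h1
    exact h1.symm
  have hzero : ∀ n : ℤ, n ≠ c → VA.proj n x = 0 := by
    intro n hn
    have h2 : ((n : ℂ) - (c : ℂ)) • VA.proj n x = 0 := by
      rw [sub_smul, hsm n, sub_self]
    rcases smul_eq_zero.mp h2 with h3 | h3
    · exact absurd (by exact_mod_cast sub_eq_zero.mp h3 : n = c) hn
    · exact h3
  by_cases hmc : m = c
  · subst hmc
    rw [if_pos rfl]
    have hx := VA.proj_sum x
    rw [finsum_eq_single _ m (fun n hn => hzero n hn)] at hx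
    exact hx
  · rw [if_neg hmc, hzero m hmc]

lemma L0op_mode (VA : GRVertexAlgebra V) {a b : V} {α β : ℤ}
    (ha : VA.proj α a = a) (hb : VA.proj β b = b) (t : ℤ) :
    VA.L0op (VA.mode a t b) = (((α + β - t - 1 : ℤ) : ℂ)) • VA.mode a t b := by
  have key := VA.L0_bracket a b t
  have h1 : VA.mode a t (∑ᶠ m : ℤ, (m : ℂ) • VA.proj m b) = (β : ℂ) • VA.mode a t b := by
    rw [show (∑ᶠ m : ℤ, (m : ℂ) • VA.proj m b) = VA.L0op b from rfl,
      L0op_eq_smul_of_proj VA hb, VA.mode_smul_right]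
  have h2 : VA.mode (∑ᶠ m : ℤ, (m : ℂ) • VA.proj m a) t b = (α : ℂ) • VA.mode a t b := by
    rw [show (∑ᶠ m : ℤ, (m : ℂ) • VA.proj m a) = VA.L0op a from rfl,
      L0op_eq_smul_of_proj VA ha, VA.mode_smul_left]
  rw [h1, h2] at key
  have h4 := eq_add_of_sub_eq key
  rw [show (∑ᶠ m : ℤ, (m : ℂ) • VA.proj m (VA.mode a t b))
    = VA.L0op (VA.mode a t b) from rfl] at h4
  rw [h4, ← add_smul, ← add_smul]
  congr 1
  push_cast
  ring

lemma proj_mode_self (VA : GRVertexAlgebra V) {a : V} {α : ℤ} (ha : VA.proj α a = a)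
    (t β : ℤ) (b : V) :
    VA.proj (α + β - t - 1) (VA.mode a t (VA.proj β b)) = VA.mode a t (VA.proj β b) := by
  have hb : VA.proj β (VA.proj β b) = VA.proj β b := by rw [VA.proj_idem, if_pos rfl]
  rw [proj_of_eigen VA (L0op_mode VA ha hb t), if_pos rfl]

/-- `mode a t` as an additive monoid hom in the right argument. -/
def modeRHom (VA : GRVertexAlgebra V) (a : V) (t : ℤ) : V →+ V :=
  AddMonoidHom.mk' (fun x => VA.mode a t x) (VA.mode_add_right a t)

/-- `mode · t b` as an additive monoid hom in the left argument. -/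
def modeLHom (VA : GRVertexAlgebra V) (t : ℤ) (b : V) : V →+ V :=
  AddMonoidHom.mk' (fun x => VA.mode x t b) (fun u u' => VA.mode_add_left u u' t b)

lemma mode_finsum_right {ι : Type} (VA : GRVertexAlgebra V) (a : V) (t : ℤ) (f : ι → V)
    (hf : (Function.support f).Finite) :
    VA.mode a t (∑ᶠ i, f i) = ∑ᶠ i, VA.mode a t (f i) := by
  exact AddMonoidHom.map_finsum (modeRHom VA a t) hf

lemma mode_finsum_left {ι : Type} (VA : GRVertexAlgebra V) (t : ℤ) (b : V) (f : ι → V)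
    (hf : (Function.support f).Finite) :
    VA.mode (∑ᶠ i, f i) t b = ∑ᶠ i, VA.mode (f i) t b := by
  exact AddMonoidHom.map_finsum (modeLHom VA t b) hf

lemma mode_decomp_right (VA : GRVertexAlgebra V) (a : V) (t : ℤ) (b : V) :
    VA.mode a t b = ∑ᶠ β : ℤ, VA.mode a t (VA.proj β b) := by
  conv_lhs => rw [← VA.proj_sum b]
  exact mode_finsum_right VA a t _ (VA.proj_support_finite b)

lemma mode_decomp_left (VA : GRVertexAlgebra V) (t : ℤ) (b u : V) :
    VA.mode u t b = ∑ᶠ α : ℤ, VA.mode (VA.proj α u) t b := by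
  conv_lhs => rw [← VA.proj_sum u]
  exact mode_finsum_left VA t b _ (VA.proj_support_finite u)

lemma msupp_right (VA : GRVertexAlgebra V) (a : V) (t : ℤ) (b : V) :
    (Function.support fun β : ℤ => VA.mode a t (VA.proj β b)).Finite :=
  (VA.proj_support_finite b).subset (fun β hβ => by
    simp only [Function.mem_support] at hβ ⊢
    intro h0
    rw [h0, VA.mode_zero_right] at hβ
    exact hβ rfl)

lemma uniform_trunc (VA : GRVertexAlgebra V) (a b : V) :
    ∃ N₀ : ℤ, ∀ (β t : ℤ), N₀ ≤ t → VA.mode a t (VA.proj β b) = 0 := by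
  classical
  set S := (VA.proj_support_finite b).toFinset with hS
  refine ⟨((S.sup fun β => (Classical.choose (VA.lower_trunc a (VA.proj β b))).toNat : ℕ) : ℤ),
    ?_⟩
  intro β t ht
  by_cases hβ : β ∈ S
  · apply Classical.choose_spec (VA.lower_trunc a (VA.proj β b))
    have h1 : (Classical.choose (VA.lower_trunc a (VA.proj β b))).toNat
        ≤ S.sup fun β => (Classical.choose (VA.lower_trunc a (VA.proj β b))).toNat :=
      Finset.le_sup (f := fun β => (Classical.choose (VA.lower_trunc a (VA.proj β b))).toNat) hβ
    have h2 := Int.self_le_toNat (Classical.choose (VA.lower_trunc a (VA.proj β b)))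
    omega
  · have h0 : VA.proj β b = 0 := by
      by_contra h0
      exact hβ ((VA.proj_support_finite b).mem_toFinset.mpr h0)
    rw [h0, VA.mode_zero_right]

variable {W : Type} [AddCommGroup W] [Module ℂ W] {VA : GRVertexAlgebra V}

lemma uniform_wtrunc (M : LBGModule VA W) (a : V) (w : W) :
    ∃ N₀ : ℤ, ∀ (β t : ℤ), N₀ ≤ t → M.wmode (VA.proj β a) t w = 0 := by
  classical
  set S := (VA.proj_support_finite a).toFinset with hS
  refine ⟨((S.sup fun β => (Classical.choose (M.lower_trunc (VA.proj β a) w)).toNat : ℕ) : ℤ),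
    ?_⟩
  intro β t ht
  by_cases hβ : β ∈ S
  · apply Classical.choose_spec (M.lower_trunc (VA.proj β a) w)
    have h1 : (Classical.choose (M.lower_trunc (VA.proj β a) w)).toNat
        ≤ S.sup fun β => (Classical.choose (M.lower_trunc (VA.proj β a) w)).toNat :=
      Finset.le_sup (f := fun β => (Classical.choose (M.lower_trunc (VA.proj β a) w)).toNat) hβ
    have h2 := Int.self_le_toNat (Classical.choose (M.lower_trunc (VA.proj β a) w))
    omega
  · have h0 : VA.proj β a = 0 := by
      by_contra h0
      exact hβ ((VA.proj_support_finite a).mem_toFinset.mpr h0)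
    rw [h0, M.wmode_zero_left]

lemma wsupp (M : LBGModule VA W) (x : V) (e : ℤ → ℤ) (w : W) :
    (Function.support fun m : ℤ => M.wmode (VA.proj m x) (e m) w).Finite :=
  (VA.proj_support_finite x).subset (fun m hm => by
    simp only [Function.mem_support] at hm ⊢
    intro h0
    rw [h0, M.wmode_zero_left] at hm
    exact hm rfl)

/-- The graded action `ϑ` at position `(k-1, l-1)` (with unshifted exponent), as a
linear map `V →ₗ W`. -/
def Phi (M : LBGModule VA W) (k l : ℕ) (w : W) : V →ₗ[ℂ] W where
  toFun x := ∑ᶠ m : ℤ, M.wmode (VA.proj m x) ((l : ℤ) - (k : ℤ) - 1 + m) w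
  map_add' x y := by
    have h : ∀ m : ℤ, M.wmode (VA.proj m (x + y)) ((l : ℤ) - (k : ℤ) - 1 + m) w
        = M.wmode (VA.proj m x) ((l : ℤ) - (k : ℤ) - 1 + m) w
          + M.wmode (VA.proj m y) ((l : ℤ) - (k : ℤ) - 1 + m) w := fun m => by
      rw [map_add, M.wmode_add_left]
    rw [finsum_congr h]
    exact finsum_add_distrib (wsupp M x _ w) (wsupp M y _ w)
  map_smul' c x := by
    simp only [RingHom.id_apply]
    have h : ∀ m : ℤ, M.wmode (VA.proj m (c • x)) ((l : ℤ) - (k : ℤ) - 1 + m) w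
        = c • M.wmode (VA.proj m x) ((l : ℤ) - (k : ℤ) - 1 + m) w := fun m => by
      rw [map_smul, M.wmode_smul_left]
    rw [finsum_congr h]
    exact (smul_finsum' c (wsupp M x _ w)).symm

lemma Phi_apply (M : LBGModule VA W) (k l : ℕ) (w : W) (x : V) :
    Phi M k l w x = ∑ᶠ m : ℤ, M.wmode (VA.proj m x) ((l : ℤ) - (k : ℤ) - 1 + m) w := rfl

lemma Phi_homog (M : LBGModule VA W) (k l : ℕ) (w : W) {x : V} {γ : ℤ}
    (hx : VA.proj γ x = x) :
    Phi M k l w x = M.wmode x ((l : ℤ) - (k : ℤ) - 1 + γ) w := by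
  rw [Phi_apply, finsum_eq_single _ γ (fun m hm => by
    rw [proj_proj_self VA hx hm, M.wmode_zero_left]), hx]

lemma omega_wmode (M : LBGModule VA W) {N : ℤ} {w : W} (hw : w ∈ M.OmegaSet N)
    (m t : ℤ) (x : V) (h : m - t - 1 < -N) : M.wmode (VA.proj m x) t w = 0 := hw m t x h

lemma omega_wmode_homog (M : LBGModule VA W) {N : ℤ} {w : W} (hw : w ∈ M.OmegaSet N)
    {x : V} {γ : ℤ} (hx : VA.proj γ x = x) (t : ℤ) (h : γ - t - 1 < -N) :
    M.wmode x t w = 0 := by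
  conv_lhs => rw [← hx]
  exact hw γ t x h

lemma resPow_homog (VA : GRVertexAlgebra V) {a : V} {α : ℤ} (ha : VA.proj α a = a)
    (N L : ℤ) (b : V) :
    VA.resPow N L a b = ∑ᶠ i : ℕ, cchoose (L + α) i • VA.mode a (N + i) b := by
  unfold GRVertexAlgebra.resPow
  rw [finsum_eq_single _ α (fun m hm => by
    simp only [proj_proj_self VA ha hm, VA.mode_zero_left, smul_zero, finsum_zero])]
  simp only [ha]

lemma resPow_decomp (VA : GRVertexAlgebra V) (N L : ℤ) (u b : V) :
    VA.resPow N L u b = ∑ᶠ α : ℤ, VA.resPow N L (VA.proj α u) b := by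
  unfold GRVertexAlgebra.resPow
  refine finsum_congr fun α => ?_
  symm
  rw [finsum_eq_single _ α (fun m hm => by
    simp only [VA.proj_idem, if_neg hm, VA.mode_zero_left, smul_zero, finsum_zero])]
  simp [VA.proj_idem]

/-- The core residue computation: the graded action of `Res_x x^N (1+x)^{L(0)-wt} ...`
after one application of the Jacobi identity, for `w ∈ Ω_{l-1}`. -/
lemma Phi_resPow (M : LBGModule VA W) (k l : ℕ) {w : W}
    (hw : w ∈ M.OmegaSet ((l : ℤ) - 1)) {a : V} {α : ℤ} (ha : VA.proj α a = a)
    (b : V) (N : ℤ) :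
    Phi M k l w (VA.resPow N (l : ℤ) a b)
      = ∑ᶠ β : ℤ, ∑ᶠ i : ℕ, ((-1 : ℂ) ^ (i : ℕ) * cchoose N i) •
          M.wmode a ((l : ℤ) + α + N - i)
            (M.wmode (VA.proj β b) (β - (k : ℤ) - 2 - N + i) w) := by
  classical
  rw [resPow_homog VA ha N (l : ℤ) b]
  obtain ⟨Nb, hNb⟩ := VA.lower_trunc a b
  have hsupp1 : (Function.support fun i : ℕ =>
      cchoose ((l : ℤ) + α) i • VA.mode a (N + i) b).Finite := by
    apply Set.Finite.subset (Set.finite_Iio (Nb - N).toNat)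
    intro i hi
    simp only [Function.mem_support] at hi
    simp only [Set.mem_Iio]
    by_contra hcon
    push_neg at hcon
    exact hi (by rw [hNb (N + i) (by omega), smul_zero])
  rw [lmap_finsum (Phi M k l w) _ hsupp1]
  have hterm : ∀ i : ℕ, Phi M k l w (cchoose ((l : ℤ) + α) i • VA.mode a (N + i) b)
      = ∑ᶠ β : ℤ, cchoose ((l : ℤ) + α) i •
          M.wmode (VA.mode a (N + i) (VA.proj β b))
            (((l : ℤ) + α) + (β - (k : ℤ) - 2 - N) - i) w := by
    intro i
    have hfin : (Function.support fun β : ℤ =>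
        Phi M k l w (VA.mode a (N + i) (VA.proj β b))).Finite :=
      (msupp_right VA a (N + i) b).subset
        (fun β hβ => by
          simp only [Function.mem_support] at hβ ⊢
          intro h0
          rw [h0, map_zero] at hβ
          exact hβ rfl)
    rw [map_smul, mode_decomp_right VA a (N + i) b,
      lmap_finsum (Phi M k l w) _ (msupp_right VA a (N + i) b),
      smul_finsum' _ hfin]
    refine finsum_congr fun β => ?_
    congr 1
    rw [Phi_homog M k l w (proj_mode_self VA ha (N + i) β b)]
    congr 1
    push_cast
    ring
  rw [finsum_congr hterm]
  obtain ⟨Nb', hNb'⟩ := uniform_trunc VA a b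
  rw [finsum_swap _ (Finset.range (Nb' - N).toNat) ((VA.proj_support_finite b).toFinset)
    (fun i β hF => by
      constructor
      · simp only [Finset.mem_range]
        by_contra hcon
        push_neg at hcon
        exact hF (by rw [hNb' β (N + i) (by omega), M.wmode_zero_left, smul_zero])
      · rw [Set.Finite.mem_toFinset]
        simp only [Function.mem_support]
        intro h0
        exact hF (by rw [h0, VA.mode_zero_right, M.wmode_zero_left, smul_zero]))]
  refine finsum_congr fun β => ?_
  have hj := M.jacobi a (VA.proj β b) w N ((l : ℤ) + α) (β - (k : ℤ) - 2 - N)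
  have hz : (∑ᶠ i : ℕ, ((-1 : ℂ) ^ (N + i : ℤ) * cchoose N i) •
      M.wmode (VA.proj β b) ((β - (k : ℤ) - 2 - N) + N - i)
        (M.wmode a (((l : ℤ) + α) + i) w)) = 0 := by
    have hzz : ∀ i : ℕ, ((-1 : ℂ) ^ (N + i : ℤ) * cchoose N i) •
        M.wmode (VA.proj β b) ((β - (k : ℤ) - 2 - N) + N - i)
          (M.wmode a (((l : ℤ) + α) + i) w) = 0 := fun i => by
      rw [omega_wmode_homog M hw ha (((l : ℤ) + α) + i) (by omega),
        M.wmode_zero_right, smul_zero]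
    rw [finsum_congr hzz, finsum_zero]
  rw [hj, hz, sub_zero]

end DShiftAux2
section DShiftAux3

open Function GRVertexAlgebra

variable {V : Type} [AddCommGroup V] [Module ℂ V]

/-- `x ∈ V` acts as zero (via `Phi`, i.e. after the diagonal shift) on every `Ω_{l-1}`. -/
def goodV (VA : GRVertexAlgebra V) (k l : ℕ) (x : V) : Prop :=
  ∀ (W : Type) [AddCommGroup W] [Module ℂ W], ∀ (M : LBGModule VA W) (w : W),
    w ∈ M.OmegaSet ((l : ℤ) - 1) → Phi M k l w x = 0

/-- The set of `good` elements forms a submodule. -/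
def Zsub (VA : GRVertexAlgebra V) (k l : ℕ) : Submodule ℂ V where
  carrier := {x | goodV VA k l x}
  add_mem' := by
    intro x y hx hy W _ _ M w hw
    rw [map_add, hx W M w hw, hy W M w hw, add_zero]
  zero_mem' := by
    intro W _ _ M w hw
    exact map_zero _
  smul_mem' := by
    intro c x hx W _ _ M w hw
    rw [map_smul, hx W M w hw, smul_zero]

lemma mem_Zsub {VA : GRVertexAlgebra V} {k l : ℕ} {x : V} :
    x ∈ Zsub VA k l ↔ goodV VA k l x := Iff.rfl

lemma good_circ (VA : GRVertexAlgebra V) (k l : ℕ) (u v : V) (p : ℕ) :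
    goodV VA k l (VA.circExpr u v k l p) := by
  intro W _ _ M w hw
  unfold GRVertexAlgebra.circExpr
  have hZ : (Function.support fun α : ℤ =>
      VA.resPow (-(k : ℤ) - l - p - 2) (l : ℤ) (VA.proj α u) v).Finite :=
    (VA.proj_support_finite u).subset (fun α hα => by
      simp only [Function.mem_support] at hα ⊢
      intro h0
      rw [h0, VA.resPow_zero_left] at hα
      exact hα rfl)
  rw [resPow_decomp VA (-(k : ℤ) - l - p - 2) (l : ℤ) u v,
    lmap_finsum (Phi M k l w) _ hZ]
  have hterm : ∀ α : ℤ,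
      Phi M k l w (VA.resPow (-(k : ℤ) - l - p - 2) (l : ℤ) (VA.proj α u) v) = 0 := by
    intro α
    rw [Phi_resPow M k l hw (by rw [VA.proj_idem, if_pos rfl]) v (-(k : ℤ) - l - p - 2)]
    have h1 : ∀ β : ℤ, (∑ᶠ i : ℕ,
        ((-1 : ℂ) ^ (i : ℕ) * cchoose (-(k : ℤ) - l - p - 2) i) •
          M.wmode (VA.proj α u) ((l : ℤ) + α + (-(k : ℤ) - l - p - 2) - i)
            (M.wmode (VA.proj β v)
              (β - (k : ℤ) - 2 - (-(k : ℤ) - l - p - 2) + i) w)) = 0 := by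
      intro β
      have h2 : ∀ i : ℕ, ((-1 : ℂ) ^ (i : ℕ) * cchoose (-(k : ℤ) - l - p - 2) i) •
          M.wmode (VA.proj α u) ((l : ℤ) + α + (-(k : ℤ) - l - p - 2) - i)
            (M.wmode (VA.proj β v)
              (β - (k : ℤ) - 2 - (-(k : ℤ) - l - p - 2) + i) w) = 0 := fun i => by
        rw [omega_wmode M hw β _ v (by omega), M.wmode_zero_right, smul_zero]
      rw [finsum_congr h2, finsum_zero]
    rw [finsum_congr h1, finsum_zero]
  rw [finsum_congr hterm, finsum_zero]

lemma good_LL (VA : GRVertexAlgebra V) (k l : ℕ) (v : V) :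
    goodV VA k l (VA.LLExpr k l v) := by
  intro W _ _ M w hw
  have hdef : VA.LLExpr k l v = VA.Lneg1op v + VA.L0op v + (((l : ℂ) - (k : ℂ)) • v) := rfl
  rw [hdef, map_add, map_add, map_smul]
  have hA : Phi M k l w (VA.Lneg1op v)
      = ∑ᶠ γ : ℤ, (-((((l : ℤ) - (k : ℤ) - 1 + (γ + 1)) : ℤ) : ℂ)) •
          M.wmode (VA.proj γ v) ((l : ℤ) - (k : ℤ) - 1 + γ) w := by
    have h1 : VA.Lneg1op v = ∑ᶠ γ : ℤ, VA.mode (VA.proj γ v) (-2) VA.one :=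
      mode_decomp_left VA (-2) VA.one v
    have hms : (Function.support fun γ : ℤ => VA.mode (VA.proj γ v) (-2) VA.one).Finite :=
      (VA.proj_support_finite v).subset (fun γ hγ => by
        simp only [Function.mem_support] at hγ ⊢
        intro h0
        rw [h0, VA.mode_zero_left] at hγ
        exact hγ rfl)
    rw [h1, lmap_finsum (Phi M k l w) _ hms]
    refine finsum_congr fun γ => ?_
    have hγv : VA.proj γ (VA.proj γ v) = VA.proj γ v := by rw [VA.proj_idem, if_pos rfl]
    have heig := L0op_mode VA hγv VA.one_homogeneous (-2)
    rw [show (γ + 0 - (-2) - 1 : ℤ) = γ + 1 from by ring] at heig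
    have hhom : VA.proj (γ + 1) (VA.mode (VA.proj γ v) (-2) VA.one)
        = VA.mode (VA.proj γ v) (-2) VA.one := by
      rw [proj_of_eigen VA heig, if_pos rfl]
    rw [Phi_homog M k l w hhom, M.LW1_deriv (VA.proj γ v) w ((l : ℤ) - (k : ℤ) - 1 + (γ + 1)),
      show ((l : ℤ) - (k : ℤ) - 1 + (γ + 1)) - 1 = (l : ℤ) - (k : ℤ) - 1 + γ from by ring]
  have hB : Phi M k l w (VA.L0op v)
      = ∑ᶠ γ : ℤ, (γ : ℂ) • M.wmode (VA.proj γ v) ((l : ℤ) - (k : ℤ) - 1 + γ) w := by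
    rw [Phi_apply]
    refine finsum_congr fun γ => ?_
    rw [proj_L0op VA v γ, M.wmode_smul_left]
  have hC : ((l : ℂ) - (k : ℂ)) • Phi M k l w v
      = ∑ᶠ γ : ℤ, ((l : ℂ) - (k : ℂ)) •
          M.wmode (VA.proj γ v) ((l : ℤ) - (k : ℤ) - 1 + γ) w := by
    rw [Phi_apply]
    exact smul_finsum' _ (wsupp M v _ w)
  have hfin : ∀ c : ℤ → ℂ, (Function.support fun γ : ℤ =>
      c γ • M.wmode (VA.proj γ v) ((l : ℤ) - (k : ℤ) - 1 + γ) w).Finite := fun c =>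
    (wsupp M v _ w).subset (fun γ hγ => by
      simp only [Function.mem_support] at hγ ⊢
      intro h0
      rw [h0, smul_zero] at hγ
      exact hγ rfl)
  rw [hA, hB, hC]
  rw [← finsum_add_distrib (hfin _) (hfin _)]
  have hfin12 : (Function.support fun γ : ℤ =>
      (-((((l : ℤ) - (k : ℤ) - 1 + (γ + 1)) : ℤ) : ℂ)) •
          M.wmode (VA.proj γ v) ((l : ℤ) - (k : ℤ) - 1 + γ) w
        + (γ : ℂ) • M.wmode (VA.proj γ v) ((l : ℤ) - (k : ℤ) - 1 + γ) w).Finite :=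
    (wsupp M v _ w).subset (fun γ hγ => by
      simp only [Function.mem_support] at hγ ⊢
      intro h0
      rw [h0, smul_zero, smul_zero, add_zero] at hγ
      exact hγ rfl)
  rw [← finsum_add_distrib hfin12 (hfin _)]
  have hpt : ∀ γ : ℤ, ((-((((l : ℤ) - (k : ℤ) - 1 + (γ + 1)) : ℤ) : ℂ)) •
          M.wmode (VA.proj γ v) ((l : ℤ) - (k : ℤ) - 1 + γ) w
        + (γ : ℂ) • M.wmode (VA.proj γ v) ((l : ℤ) - (k : ℤ) - 1 + γ) w)
        + ((l : ℂ) - (k : ℂ)) • M.wmode (VA.proj γ v) ((l : ℤ) - (k : ℤ) - 1 + γ) w = 0 := by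
    intro γ
    rw [← add_smul, ← add_smul,
      show (-((((l : ℤ) - (k : ℤ) - 1 + (γ + 1)) : ℤ) : ℂ) + (γ : ℂ))
        + ((l : ℂ) - (k : ℂ)) = 0 from by push_cast; ring, zero_smul]
  rw [finsum_congr hpt, finsum_zero]

/-- The graded action of a diamond-product entry collapses to a single composition. -/
lemma Phi_diamond {W : Type} [AddCommGroup W] [Module ℂ W] {VA : GRVertexAlgebra V}
    (M : LBGModule VA W) (k l : ℕ) {w : W} (hw : w ∈ M.OmegaSet ((l : ℤ) - 1))
    (a b : V) (q : ℕ) :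
    Phi M k l w (VA.diamondEntry a b k q l)
      = ∑ᶠ α : ℤ, ∑ᶠ β : ℤ,
          M.wmode (VA.proj α a) (α - (k : ℤ) - 1 + q)
            (M.wmode (VA.proj β b) (β + (l : ℤ) - 1 - q) w) := by
  classical
  set A : ℤ := -(k : ℤ) + q - l - 1 with hA
  have hTz : ∀ (α β : ℤ) (s : ℕ), (q : ℤ) ≤ s →
      M.wmode (VA.proj α a) (α - (k : ℤ) - 1 + q - s)
        (M.wmode (VA.proj β b) (β + (l : ℤ) - 1 - q + s) w) = 0 := by
    intro α β s hs
    rw [omega_wmode M hw β _ b (by omega), M.wmode_zero_right]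
  unfold GRVertexAlgebra.diamondEntry
  rw [map_sum]
  have hterm : ∀ m ∈ Finset.range (q + 1),
      Phi M k l w (cchoose (-(k : ℤ) + q - l - 1) m •
          VA.resPow (-(k : ℤ) + q - l - m - 1) (l : ℤ) a b)
        = ∑ᶠ α : ℤ, ∑ᶠ β : ℤ, cchoose A m •
            ∑ᶠ i : ℕ, ((-1 : ℂ) ^ (i : ℕ) * cchoose (A - m) i) •
              M.wmode (VA.proj α a) (α - (k : ℤ) - 1 + q - ((m + i : ℕ) : ℤ))
                (M.wmode (VA.proj β b) (β + (l : ℤ) - 1 - q + ((m + i : ℕ) : ℤ)) w) := by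
    intro m _
    rw [map_smul]
    have hsup : (Function.support fun α : ℤ =>
        VA.resPow (-(k : ℤ) + q - l - m - 1) (l : ℤ) (VA.proj α a) b).Finite :=
      (VA.proj_support_finite a).subset (fun α hα => by
        simp only [Function.mem_support] at hα ⊢
        intro h0
        rw [h0, VA.resPow_zero_left] at hα
        exact hα rfl)
    have hsup2 : (Function.support fun α : ℤ =>
        Phi M k l w (VA.resPow (-(k : ℤ) + q - l - m - 1) (l : ℤ) (VA.proj α a) b)).Finite :=
      hsup.subset (fun α hα => by
        simp only [Function.mem_support] at hα ⊢
        intro h0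
        rw [h0, map_zero] at hα
        exact hα rfl)
    rw [resPow_decomp VA (-(k : ℤ) + q - l - m - 1) (l : ℤ) a b,
      lmap_finsum (Phi M k l w) _ hsup, smul_finsum' _ hsup2]
    refine finsum_congr fun α => ?_
    rw [Phi_resPow M k l hw (by rw [VA.proj_idem, if_pos rfl]) b (-(k : ℤ) + q - l - m - 1)]
    have hβfin : (Function.support fun β : ℤ => ∑ᶠ i : ℕ,
        ((-1 : ℂ) ^ (i : ℕ) * cchoose (-(k : ℤ) + q - l - m - 1) i) •
          M.wmode (VA.proj α a) ((l : ℤ) + α + (-(k : ℤ) + q - l - m - 1) - i)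
            (M.wmode (VA.proj β b)
              (β - (k : ℤ) - 2 - (-(k : ℤ) + q - l - m - 1) + i) w)).Finite :=
      (VA.proj_support_finite b).subset (fun β hβ => by
        simp only [Function.mem_support] at hβ ⊢
        intro h0
        have hz : ∀ i : ℕ, ((-1 : ℂ) ^ (i : ℕ) * cchoose (-(k : ℤ) + q - l - m - 1) i) •
            M.wmode (VA.proj α a) ((l : ℤ) + α + (-(k : ℤ) + q - l - m - 1) - i)
              (M.wmode (VA.proj β b)
                (β - (k : ℤ) - 2 - (-(k : ℤ) + q - l - m - 1) + i) w) = 0 := fun i => by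
          rw [h0, M.wmode_zero_left, M.wmode_zero_right, smul_zero]
        rw [finsum_congr hz, finsum_zero] at hβ
        exact hβ rfl)
    rw [smul_finsum' _ hβfin]
    refine finsum_congr fun β => ?_
    congr 1
    refine finsum_congr fun i => ?_
    rw [show (β - (k : ℤ) - 2 - (-(k : ℤ) + q - l - m - 1) + i)
        = (β + (l : ℤ) - 1 - q + ((m + i : ℕ) : ℤ)) from by push_cast; ring,
      show ((l : ℤ) + α + (-(k : ℤ) + q - l - m - 1) - i)
        = (α - (k : ℤ) - 1 + q - ((m + i : ℕ) : ℤ)) from by push_cast; ring,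
      show (-(k : ℤ) + q - l - m - 1 : ℤ) = A - m from by rw [hA]; push_cast; ring]
  rw [Finset.sum_congr rfl hterm]
  have hswap1 : (∑ m ∈ Finset.range (q + 1), ∑ᶠ α : ℤ, ∑ᶠ β : ℤ, cchoose A m •
      ∑ᶠ i : ℕ, ((-1 : ℂ) ^ (i : ℕ) * cchoose (A - m) i) •
        M.wmode (VA.proj α a) (α - (k : ℤ) - 1 + q - ((m + i : ℕ) : ℤ))
          (M.wmode (VA.proj β b) (β + (l : ℤ) - 1 - q + ((m + i : ℕ) : ℤ)) w))
      = ∑ᶠ α : ℤ, ∑ m ∈ Finset.range (q + 1), ∑ᶠ β : ℤ, cchoose A m •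
      ∑ᶠ i : ℕ, ((-1 : ℂ) ^ (i : ℕ) * cchoose (A - m) i) •
        M.wmode (VA.proj α a) (α - (k : ℤ) - 1 + q - ((m + i : ℕ) : ℤ))
          (M.wmode (VA.proj β b) (β + (l : ℤ) - 1 - q + ((m + i : ℕ) : ℤ)) w) := by
    apply sum_finsum_comm
    intro m _
    refine (VA.proj_support_finite a).subset (fun α hα => ?_)
    simp only [Function.mem_support] at hα ⊢
    intro h0
    apply hα
    have hz : ∀ β : ℤ, (cchoose A m •
        ∑ᶠ i : ℕ, ((-1 : ℂ) ^ (i : ℕ) * cchoose (A - m) i) •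
          M.wmode (VA.proj α a) (α - (k : ℤ) - 1 + q - ((m + i : ℕ) : ℤ))
            (M.wmode (VA.proj β b) (β + (l : ℤ) - 1 - q + ((m + i : ℕ) : ℤ)) w)) = 0 := by
      intro β
      have hz2 : ∀ i : ℕ, ((-1 : ℂ) ^ (i : ℕ) * cchoose (A - m) i) •
          M.wmode (VA.proj α a) (α - (k : ℤ) - 1 + q - ((m + i : ℕ) : ℤ))
            (M.wmode (VA.proj β b) (β + (l : ℤ) - 1 - q + ((m + i : ℕ) : ℤ)) w) = 0 :=
        fun i => by rw [h0, M.wmode_zero_left, smul_zero]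
      rw [finsum_congr hz2, finsum_zero, smul_zero]
    rw [finsum_congr hz, finsum_zero]
  rw [hswap1]
  refine finsum_congr fun α => ?_
  have hswap2 : (∑ m ∈ Finset.range (q + 1), ∑ᶠ β : ℤ, cchoose A m •
      ∑ᶠ i : ℕ, ((-1 : ℂ) ^ (i : ℕ) * cchoose (A - m) i) •
        M.wmode (VA.proj α a) (α - (k : ℤ) - 1 + q - ((m + i : ℕ) : ℤ))
          (M.wmode (VA.proj β b) (β + (l : ℤ) - 1 - q + ((m + i : ℕ) : ℤ)) w))
      = ∑ᶠ β : ℤ, ∑ m ∈ Finset.range (q + 1), cchoose A m •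
      ∑ᶠ i : ℕ, ((-1 : ℂ) ^ (i : ℕ) * cchoose (A - m) i) •
        M.wmode (VA.proj α a) (α - (k : ℤ) - 1 + q - ((m + i : ℕ) : ℤ))
          (M.wmode (VA.proj β b) (β + (l : ℤ) - 1 - q + ((m + i : ℕ) : ℤ)) w) := by
    apply sum_finsum_comm
    intro m _
    refine (VA.proj_support_finite b).subset (fun β hβ => ?_)
    simp only [Function.mem_support] at hβ ⊢
    intro h0
    apply hβ
    have hz2 : ∀ i : ℕ, ((-1 : ℂ) ^ (i : ℕ) * cchoose (A - m) i) •
        M.wmode (VA.proj α a) (α - (k : ℤ) - 1 + q - ((m + i : ℕ) : ℤ))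
          (M.wmode (VA.proj β b) (β + (l : ℤ) - 1 - q + ((m + i : ℕ) : ℤ)) w) = 0 :=
      fun i => by rw [h0, M.wmode_zero_left, M.wmode_zero_right, smul_zero]
    rw [finsum_congr hz2, finsum_zero, smul_zero]
  rw [hswap2]
  refine finsum_congr fun β => ?_
  have hfs : ∀ m : ℕ, (∑ᶠ i : ℕ, ((-1 : ℂ) ^ (i : ℕ) * cchoose (A - m) i) •
      M.wmode (VA.proj α a) (α - (k : ℤ) - 1 + q - ((m + i : ℕ) : ℤ))
        (M.wmode (VA.proj β b) (β + (l : ℤ) - 1 - q + ((m + i : ℕ) : ℤ)) w))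
      = ∑ i ∈ Finset.range (q + 1), ((-1 : ℂ) ^ (i : ℕ) * cchoose (A - m) i) •
      M.wmode (VA.proj α a) (α - (k : ℤ) - 1 + q - ((m + i : ℕ) : ℤ))
        (M.wmode (VA.proj β b) (β + (l : ℤ) - 1 - q + ((m + i : ℕ) : ℤ)) w) := by
    intro m
    apply finsum_eq_sum_of_support_subset
    intro i hi
    simp only [Function.mem_support] at hi
    simp only [Finset.coe_range, Set.mem_Iio]
    by_contra hcon
    push_neg at hcon
    exact hi (by rw [hTz α β (m + i) (by push_cast; omega), smul_zero])
  rw [Finset.sum_congr rfl (fun m _ => by rw [hfs m])]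
  have := key_collapse (W := W) A q
    (fun s : ℕ => M.wmode (VA.proj α a) (α - (k : ℤ) - 1 + q - (s : ℤ))
      (M.wmode (VA.proj β b) (β + (l : ℤ) - 1 - q + (s : ℤ)) w))
    (fun s hs => hTz α β s (by exact_mod_cast Int.ofNat_le.mpr hs))
  rw [this]
  norm_num

end DShiftAux3
section DShiftAux4

open Function GRVertexAlgebra

variable {V : Type} [AddCommGroup V] [Module ℂ V] {VA : GRVertexAlgebra V}
variable {W : Type} [AddCommGroup W] [Module ℂ W]

lemma neg_one_zpow_sub (p : ℤ) (j : ℕ) :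
    (-1 : ℂ) ^ (p - (j : ℤ)) = (-1 : ℂ) ^ (p + (j : ℤ)) := by
  have h2 : (-1 : ℂ) ^ (2 * (j : ℤ)) = 1 := by
    rw [zpow_mul]
    norm_num
  have hne : (-1 : ℂ) ≠ 0 := by norm_num
  calc (-1 : ℂ) ^ (p - (j : ℤ))
      = (-1 : ℂ) ^ (p - (j : ℤ)) * (-1 : ℂ) ^ (2 * (j : ℤ)) := by rw [h2, mul_one]
    _ = (-1 : ℂ) ^ ((p - (j : ℤ)) + 2 * (j : ℤ)) := (zpow_add₀ hne _ _).symm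
    _ = (-1 : ℂ) ^ (p + (j : ℤ)) := by
        rw [show (p - (j : ℤ)) + 2 * (j : ℤ) = p + (j : ℤ) from by ring]

/-- `Phi` of the third Jacobi-element sum, via the module Jacobi identity. -/
lemma Phi_S3 (M : LBGModule VA W) (k l : ℕ) {w : W}
    (u v : V) {wtv : ℤ} (hv : VA.proj wtv v = v) (p n : ℤ) :
    Phi M k l w (∑ᶠ j : ℕ, cchoose (wtv + n - (k : ℤ) - 1) j • VA.mode v (p + j) u)
      = ∑ᶠ α : ℤ,
          ((∑ᶠ i : ℕ, ((-1 : ℂ) ^ (i : ℕ) * cchoose p i) •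
              M.wmode v ((wtv + n - (k : ℤ) - 1) + p - i)
                (M.wmode (VA.proj α u) (((l : ℤ) + α - p - n - 1) + i) w))
            - (∑ᶠ i : ℕ, ((-1 : ℂ) ^ (p + i : ℤ) * cchoose p i) •
              M.wmode (VA.proj α u) (((l : ℤ) + α - p - n - 1) + p - i)
                (M.wmode v ((wtv + n - (k : ℤ) - 1) + i) w))) := by
  classical
  obtain ⟨Nb, hNb⟩ := VA.lower_trunc v u
  have hsupp1 : (Function.support fun j : ℕ =>
      cchoose (wtv + n - (k : ℤ) - 1) j • VA.mode v (p + j) u).Finite := by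
    apply Set.Finite.subset (Set.finite_Iio (Nb - p).toNat)
    intro j hj
    simp only [Function.mem_support] at hj
    simp only [Set.mem_Iio]
    by_contra hcon
    push_neg at hcon
    exact hj (by rw [hNb (p + j) (by omega), smul_zero])
  rw [lmap_finsum (Phi M k l w) _ hsupp1]
  have hterm : ∀ j : ℕ,
      Phi M k l w (cchoose (wtv + n - (k : ℤ) - 1) j • VA.mode v (p + j) u)
        = ∑ᶠ α : ℤ, cchoose (wtv + n - (k : ℤ) - 1) j •
            M.wmode (VA.mode v (p + j) (VA.proj α u))
              ((wtv + n - (k : ℤ) - 1) + ((l : ℤ) + α - p - n - 1) - j) w := by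
    intro j
    have hfin0 : (Function.support fun α : ℤ =>
        VA.mode v (p + j) (VA.proj α u)).Finite := msupp_right VA v (p + j) u
    have hfin : (Function.support fun α : ℤ =>
        Phi M k l w (VA.mode v (p + j) (VA.proj α u))).Finite :=
      hfin0.subset (fun α hα => by
        simp only [Function.mem_support] at hα ⊢
        intro h0
        rw [h0, map_zero] at hα
        exact hα rfl)
    rw [map_smul, mode_decomp_right VA v (p + j) u, lmap_finsum (Phi M k l w) _ hfin0,
      smul_finsum' _ hfin]
    refine finsum_congr fun α => ?_
    congr 1
    rw [Phi_homog M k l w (proj_mode_self VA hv (p + j) α u)]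
    congr 1
    push_cast
    ring
  rw [finsum_congr hterm]
  obtain ⟨Nb', hNb'⟩ := uniform_trunc VA v u
  rw [finsum_swap _ (Finset.range (Nb' - p).toNat) ((VA.proj_support_finite u).toFinset)
    (fun j α hF => by
      constructor
      · simp only [Finset.mem_range]
        by_contra hcon
        push_neg at hcon
        exact hF (by rw [hNb' α (p + j) (by omega), M.wmode_zero_left, smul_zero])
      · rw [Set.Finite.mem_toFinset]
        simp only [Function.mem_support]
        intro h0
        exact hF (by rw [h0, VA.mode_zero_right, M.wmode_zero_left, smul_zero]))]
  refine finsum_congr fun α => ?_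
  exact M.jacobi v (VA.proj α u) w p (wtv + n - (k : ℤ) - 1) ((l : ℤ) + α - p - n - 1)

/-- `Phi` of the first Jacobi-element sum. -/
lemma Phi_S1 (M : LBGModule VA W) (k l : ℕ) {w : W} (hw : w ∈ M.OmegaSet ((l : ℤ) - 1))
    (u v : V) {wtv : ℤ} (hv : VA.proj wtv v = v) (p n : ℤ) :
    Phi M k l w (∑ᶠ j : ℕ, if (j : ℤ) ≤ n + p then
        ((-1 : ℂ) ^ (j : ℕ) * cchoose p j) •
          VA.diamondEntry v u k (n + p - j).toNat l else 0)
      = ∑ᶠ α : ℤ, ∑ᶠ j : ℕ, ((-1 : ℂ) ^ (j : ℕ) * cchoose p j) •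
          M.wmode v ((wtv + n - (k : ℤ) - 1) + p - j)
            (M.wmode (VA.proj α u) (((l : ℤ) + α - p - n - 1) + j) w) := by
  classical
  have hsupp1 : (Function.support fun j : ℕ => if (j : ℤ) ≤ n + p then
      ((-1 : ℂ) ^ (j : ℕ) * cchoose p j) •
        VA.diamondEntry v u k (n + p - j).toNat l else 0).Finite := by
    apply Set.Finite.subset (Set.finite_Iio ((n + p).toNat + 1))
    intro j hj
    simp only [Function.mem_support] at hj
    simp only [Set.mem_Iio]
    by_contra hcon
    push_neg at hcon
    exact hj (if_neg (by omega))
  rw [lmap_finsum (Phi M k l w) _ hsupp1]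
  have hterm : ∀ j : ℕ,
      Phi M k l w (if (j : ℤ) ≤ n + p then
        ((-1 : ℂ) ^ (j : ℕ) * cchoose p j) •
          VA.diamondEntry v u k (n + p - j).toNat l else 0)
      = ∑ᶠ α : ℤ, (if (j : ℤ) ≤ n + p then
          ((-1 : ℂ) ^ (j : ℕ) * cchoose p j) •
            M.wmode v (wtv - (k : ℤ) - 1 + ((n + p - j).toNat : ℤ))
              (M.wmode (VA.proj α u)
                (α + (l : ℤ) - 1 - ((n + p - j).toNat : ℤ)) w) else 0) := by
    intro j
    by_cases hc : (j : ℤ) ≤ n + p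
    · rw [if_pos hc, map_smul, Phi_diamond M k l hw v u ((n + p - j).toNat)]
      have hcol : (∑ᶠ α' : ℤ, ∑ᶠ β : ℤ,
          M.wmode (VA.proj α' v) (α' - (k : ℤ) - 1 + ((n + p - j).toNat : ℤ))
            (M.wmode (VA.proj β u) (β + (l : ℤ) - 1 - ((n + p - j).toNat : ℤ)) w))
          = ∑ᶠ β : ℤ, M.wmode v (wtv - (k : ℤ) - 1 + ((n + p - j).toNat : ℤ))
              (M.wmode (VA.proj β u) (β + (l : ℤ) - 1 - ((n + p - j).toNat : ℤ)) w) := by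
        rw [finsum_eq_single _ wtv (fun α' hα' => by
          have h0 := proj_proj_self VA hv hα'
          have hz : ∀ β : ℤ, M.wmode (VA.proj α' v)
              (α' - (k : ℤ) - 1 + ((n + p - j).toNat : ℤ))
              (M.wmode (VA.proj β u) (β + (l : ℤ) - 1 - ((n + p - j).toNat : ℤ)) w)
              = 0 := fun β => by rw [h0, M.wmode_zero_left]
          rw [finsum_congr hz, finsum_zero])]
        rw [hv]
      rw [hcol]
      have hfinα : (Function.support fun β : ℤ =>
          M.wmode v (wtv - (k : ℤ) - 1 + ((n + p - j).toNat : ℤ))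
            (M.wmode (VA.proj β u)
              (β + (l : ℤ) - 1 - ((n + p - j).toNat : ℤ)) w)).Finite :=
        (VA.proj_support_finite u).subset (fun β hβ => by
          simp only [Function.mem_support] at hβ ⊢
          intro h0
          rw [h0, M.wmode_zero_left, M.wmode_zero_right] at hβ
          exact hβ rfl)
      rw [smul_finsum' _ hfinα]
      refine finsum_congr fun β => ?_
      rw [if_pos hc]
    · rw [if_neg hc, map_zero]
      symm
      have hz : ∀ α : ℤ, (if (j : ℤ) ≤ n + p then
          ((-1 : ℂ) ^ (j : ℕ) * cchoose p j) •
            M.wmode v (wtv - (k : ℤ) - 1 + ((n + p - j).toNat : ℤ))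
              (M.wmode (VA.proj α u)
                (α + (l : ℤ) - 1 - ((n + p - j).toNat : ℤ)) w) else 0) = 0 :=
        fun α => if_neg hc
      rw [finsum_congr hz, finsum_zero]
  rw [finsum_congr hterm]
  rw [finsum_swap _ (Finset.range ((n + p).toNat + 1)) ((VA.proj_support_finite u).toFinset)
    (fun j α hF => by
      constructor
      · simp only [Finset.mem_range]
        by_contra hcon
        push_neg at hcon
        exact hF (if_neg (by omega))
      · rw [Set.Finite.mem_toFinset]
        simp only [Function.mem_support]
        intro h0
        apply hF
        by_cases hc : (j : ℤ) ≤ n + p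
        · rw [if_pos hc, h0, M.wmode_zero_left, M.wmode_zero_right, smul_zero]
        · exact if_neg hc)]
  refine finsum_congr fun α => ?_
  refine finsum_congr fun j => ?_
  by_cases hc : (j : ℤ) ≤ n + p
  · rw [if_pos hc,
      show (((n + p - j).toNat : ℤ)) = n + p - j from by omega,
      show (wtv - (k : ℤ) - 1 + (n + p - (j : ℤ))) = (wtv + n - (k : ℤ) - 1) + p - j
        from by ring,
      show (α + (l : ℤ) - 1 - (n + p - (j : ℤ))) = ((l : ℤ) + α - p - n - 1) + j
        from by ring]
  · rw [if_neg hc]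
    symm
    rw [omega_wmode M hw α (((l : ℤ) + α - p - n - 1) + j) u (by omega),
      M.wmode_zero_right, smul_zero]

/-- `Phi` of the second Jacobi-element sum. -/
lemma Phi_S2 (M : LBGModule VA W) (k l : ℕ) {w : W} (hw : w ∈ M.OmegaSet ((l : ℤ) - 1))
    (u v : V) {wtv : ℤ} (hv : VA.proj wtv v = v) (l₀ p n : ℤ) (hl₀ : l₀ + p = (l : ℤ)) :
    Phi M k l w (∑ᶠ j : ℕ, if (j : ℤ) ≤ l₀ - n + (k : ℤ) + p then
        ((-1 : ℂ) ^ ((p : ℤ) - (j : ℤ)) * cchoose p j) •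
          VA.diamondEntry u v k (l₀ - n + (k : ℤ) + p - j).toNat l else 0)
      = ∑ᶠ α : ℤ, ∑ᶠ j : ℕ, ((-1 : ℂ) ^ (p + j : ℤ) * cchoose p j) •
          M.wmode (VA.proj α u) (((l : ℤ) + α - p - n - 1) + p - j)
            (M.wmode v ((wtv + n - (k : ℤ) - 1) + j) w) := by
  classical
  have hsupp1 : (Function.support fun j : ℕ => if (j : ℤ) ≤ l₀ - n + (k : ℤ) + p then
      ((-1 : ℂ) ^ ((p : ℤ) - (j : ℤ)) * cchoose p j) •
        VA.diamondEntry u v k (l₀ - n + (k : ℤ) + p - j).toNat l else 0).Finite := by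
    apply Set.Finite.subset (Set.finite_Iio ((l₀ - n + (k : ℤ) + p).toNat + 1))
    intro j hj
    simp only [Function.mem_support] at hj
    simp only [Set.mem_Iio]
    by_contra hcon
    push_neg at hcon
    exact hj (if_neg (by omega))
  rw [lmap_finsum (Phi M k l w) _ hsupp1]
  have hterm : ∀ j : ℕ,
      Phi M k l w (if (j : ℤ) ≤ l₀ - n + (k : ℤ) + p then
        ((-1 : ℂ) ^ ((p : ℤ) - (j : ℤ)) * cchoose p j) •
          VA.diamondEntry u v k (l₀ - n + (k : ℤ) + p - j).toNat l else 0)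
      = ∑ᶠ α : ℤ, (if (j : ℤ) ≤ l₀ - n + (k : ℤ) + p then
          ((-1 : ℂ) ^ ((p : ℤ) - (j : ℤ)) * cchoose p j) •
            M.wmode (VA.proj α u)
              (α - (k : ℤ) - 1 + ((l₀ - n + (k : ℤ) + p - j).toNat : ℤ))
              (M.wmode v
                (wtv + (l : ℤ) - 1 - ((l₀ - n + (k : ℤ) + p - j).toNat : ℤ)) w) else 0) := by
    intro j
    by_cases hc : (j : ℤ) ≤ l₀ - n + (k : ℤ) + p
    · rw [if_pos hc, map_smul,
        Phi_diamond M k l hw u v ((l₀ - n + (k : ℤ) + p - j).toNat)]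
      have hcol : ∀ α : ℤ, (∑ᶠ β : ℤ,
          M.wmode (VA.proj α u)
            (α - (k : ℤ) - 1 + ((l₀ - n + (k : ℤ) + p - j).toNat : ℤ))
            (M.wmode (VA.proj β v)
              (β + (l : ℤ) - 1 - ((l₀ - n + (k : ℤ) + p - j).toNat : ℤ)) w))
          = M.wmode (VA.proj α u)
              (α - (k : ℤ) - 1 + ((l₀ - n + (k : ℤ) + p - j).toNat : ℤ))
              (M.wmode v
                (wtv + (l : ℤ) - 1 - ((l₀ - n + (k : ℤ) + p - j).toNat : ℤ)) w) := by
        intro α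
        rw [finsum_eq_single _ wtv (fun β hβ => by
          rw [proj_proj_self VA hv hβ, M.wmode_zero_left, M.wmode_zero_right]), hv]
      rw [finsum_congr hcol]
      have hfinα : (Function.support fun α : ℤ =>
          M.wmode (VA.proj α u)
            (α - (k : ℤ) - 1 + ((l₀ - n + (k : ℤ) + p - j).toNat : ℤ))
            (M.wmode v
              (wtv + (l : ℤ) - 1 - ((l₀ - n + (k : ℤ) + p - j).toNat : ℤ)) w)).Finite :=
        (VA.proj_support_finite u).subset (fun α hα => by
          simp only [Function.mem_support] at hα ⊢
          intro h0
          rw [h0, M.wmode_zero_left] at hα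
          exact hα rfl)
      rw [smul_finsum' _ hfinα]
      refine finsum_congr fun α => ?_
      rw [if_pos hc]
    · rw [if_neg hc, map_zero]
      symm
      have hz : ∀ α : ℤ, (if (j : ℤ) ≤ l₀ - n + (k : ℤ) + p then
          ((-1 : ℂ) ^ ((p : ℤ) - (j : ℤ)) * cchoose p j) •
            M.wmode (VA.proj α u)
              (α - (k : ℤ) - 1 + ((l₀ - n + (k : ℤ) + p - j).toNat : ℤ))
              (M.wmode v
                (wtv + (l : ℤ) - 1 - ((l₀ - n + (k : ℤ) + p - j).toNat : ℤ)) w) else 0)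
          = 0 := fun α => if_neg hc
      rw [finsum_congr hz, finsum_zero]
  rw [finsum_congr hterm]
  rw [finsum_swap _ (Finset.range ((l₀ - n + (k : ℤ) + p).toNat + 1))
    ((VA.proj_support_finite u).toFinset)
    (fun j α hF => by
      constructor
      · simp only [Finset.mem_range]
        by_contra hcon
        push_neg at hcon
        exact hF (if_neg (by omega))
      · rw [Set.Finite.mem_toFinset]
        simp only [Function.mem_support]
        intro h0
        apply hF
        by_cases hc : (j : ℤ) ≤ l₀ - n + (k : ℤ) + p
        · rw [if_pos hc, h0, M.wmode_zero_left, smul_zero]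
        · exact if_neg hc)]
  refine finsum_congr fun α => ?_
  refine finsum_congr fun j => ?_
  by_cases hc : (j : ℤ) ≤ l₀ - n + (k : ℤ) + p
  · rw [if_pos hc,
      show (((l₀ - n + (k : ℤ) + p - j).toNat : ℤ)) = l₀ - n + (k : ℤ) + p - j
        from by omega,
      show (α - (k : ℤ) - 1 + (l₀ - n + (k : ℤ) + p - (j : ℤ)))
        = ((l : ℤ) + α - p - n - 1) + p - j from by omega,
      show (wtv + (l : ℤ) - 1 - (l₀ - n + (k : ℤ) + p - (j : ℤ)))
        = (wtv + n - (k : ℤ) - 1) + j from by omega,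
      neg_one_zpow_sub p j]
  · rw [if_neg hc]
    symm
    rw [omega_wmode_homog M hw hv ((wtv + n - (k : ℤ) - 1) + j) (by omega),
      M.wmode_zero_right, smul_zero]

end DShiftAux4
section DShiftAux5

open Function GRVertexAlgebra

variable {V : Type} [AddCommGroup V] [Module ℂ V]

lemma good_jEntry (VA : GRVertexAlgebra V) (k l : ℕ) (u v : V) (wtv : ℤ)
    (hv : VA.proj wtv v = v) (l₀ p n : ℤ) (hl₀ : l₀ + p = (l : ℤ)) :
    goodV VA k l (VA.jEntry u v wtv k l₀ p n) := by
  intro W _ _ M w hw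
  have hlt : (l₀ + p).toNat = l := by omega
  unfold GRVertexAlgebra.jEntry
  rw [hlt, map_sub, map_sub,
    Phi_S1 M k l hw u v hv p n, Phi_S2 M k l hw u v hv l₀ p n hl₀,
    Phi_S3 M k l u v hv p n]
  have hfin1 : (Function.support fun α : ℤ =>
      ∑ᶠ j : ℕ, ((-1 : ℂ) ^ (j : ℕ) * cchoose p j) •
        M.wmode v ((wtv + n - (k : ℤ) - 1) + p - j)
          (M.wmode (VA.proj α u) (((l : ℤ) + α - p - n - 1) + j) w)).Finite :=
    (VA.proj_support_finite u).subset (fun α hα => by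
      simp only [Function.mem_support] at hα ⊢
      intro h0
      apply hα
      have hz : ∀ j : ℕ, ((-1 : ℂ) ^ (j : ℕ) * cchoose p j) •
          M.wmode v ((wtv + n - (k : ℤ) - 1) + p - j)
            (M.wmode (VA.proj α u) (((l : ℤ) + α - p - n - 1) + j) w) = 0 := fun j => by
        rw [h0, M.wmode_zero_left, M.wmode_zero_right, smul_zero]
      rw [finsum_congr hz, finsum_zero])
  have hfin2 : (Function.support fun α : ℤ =>
      ∑ᶠ j : ℕ, ((-1 : ℂ) ^ (p + j : ℤ) * cchoose p j) •
        M.wmode (VA.proj α u) (((l : ℤ) + α - p - n - 1) + p - j)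
          (M.wmode v ((wtv + n - (k : ℤ) - 1) + j) w)).Finite :=
    (VA.proj_support_finite u).subset (fun α hα => by
      simp only [Function.mem_support] at hα ⊢
      intro h0
      apply hα
      have hz : ∀ j : ℕ, ((-1 : ℂ) ^ (p + j : ℤ) * cchoose p j) •
          M.wmode (VA.proj α u) (((l : ℤ) + α - p - n - 1) + p - j)
            (M.wmode v ((wtv + n - (k : ℤ) - 1) + j) w) = 0 := fun j => by
        rw [h0, M.wmode_zero_left, smul_zero]
      rw [finsum_congr hz, finsum_zero])
  rw [finsum_sub_distrib hfin1 hfin2]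
  abel

/-- Evaluation of a matrix entry, as a linear map. -/
def evU (k l : ℕ) : UInf V →ₗ[ℂ] V where
  toFun A := A.1 k l
  map_add' A B := rfl
  map_smul' c A := rfl

lemma Usingle_entry (x : V) (k₀ l₀ k l : ℕ) :
    (Usingle x k₀ l₀).1 k l = if k = k₀ ∧ l = l₀ then x else 0 := rfl

lemma udiamond_single_single (VA : GRVertexAlgebra V) (a b : V) (k₁ m l₂ k l : ℕ) :
    (VA.udiamond (Usingle a k₁ m) (Usingle b m l₂)).1 k l
      = if k = k₁ ∧ l = l₂ then VA.diamondEntry a b k m l else 0 := by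
  show (∑ᶠ n' : ℕ, VA.diamondEntry ((Usingle a k₁ m).1 k n')
      ((Usingle b m l₂).1 n' l) k n' l) = _
  rw [finsum_eq_single _ m (fun n' hn' => by
    rw [Usingle_entry, if_neg (fun hc => hn' hc.2)]
    exact VA.diamondEntry_zero_left _ _ _ _)]
  rw [Usingle_entry, Usingle_entry]
  by_cases h1 : k = k₁
  · by_cases h2 : l = l₂
    · rw [if_pos ⟨h1, rfl⟩, if_pos ⟨rfl, h2⟩, if_pos ⟨h1, h2⟩]
    · rw [if_pos ⟨h1, rfl⟩, if_neg (fun hc : m = m ∧ l = l₂ => h2 hc.2),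
        VA.diamondEntry_zero_right, if_neg (fun hc : k = k₁ ∧ l = l₂ => h2 hc.2)]
  · rw [if_neg (fun hc : k = k₁ ∧ m = m => h1 hc.1), VA.diamondEntry_zero_left,
      if_neg (fun hc : k = k₁ ∧ l = l₂ => h1 hc.1)]

lemma jElt_entry (VA : GRVertexAlgebra V) (u v : V) (wtv : ℤ) (k₀ : ℕ) (l₀ p n : ℤ)
    (k l : ℕ) :
    (VA.jElt u v wtv k₀ l₀ p n).1 k l
      = if k = k₀ ∧ l = (l₀ + p).toNat then VA.jEntry u v wtv k₀ l₀ p n else 0 := by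
  classical
  have hsub : ∀ X Y : UInf V, (X - Y).1 k l = X.1 k l - Y.1 k l := fun X Y => rfl
  have hF1fin : (Function.support fun j : ℕ =>
      if (j : ℤ) ≤ n + p then ((-1 : ℂ) ^ (j : ℕ) * cchoose p j) •
        VA.udiamond (Usingle v k₀ (n + p - j).toNat)
          (Usingle u (n + p - j).toNat (l₀ + p).toNat) else 0).Finite := by
    apply Set.Finite.subset (Set.finite_Iio ((n + p).toNat + 1))
    intro j hj
    simp only [Function.mem_support] at hj
    simp only [Set.mem_Iio]
    by_contra hcon
    push_neg at hcon
    exact hj (if_neg (by omega))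
  have hF2fin : (Function.support fun j : ℕ =>
      if (j : ℤ) ≤ l₀ - n + (k₀ : ℤ) + p then
        ((-1 : ℂ) ^ ((p : ℤ) - (j : ℤ)) * cchoose p j) •
          VA.udiamond (Usingle u k₀ (l₀ - n + (k₀ : ℤ) + p - j).toNat)
            (Usingle v (l₀ - n + (k₀ : ℤ) + p - j).toNat (l₀ + p).toNat) else 0).Finite := by
    apply Set.Finite.subset (Set.finite_Iio ((l₀ - n + (k₀ : ℤ) + p).toNat + 1))
    intro j hj
    simp only [Function.mem_support] at hj
    simp only [Set.mem_Iio]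
    by_contra hcon
    push_neg at hcon
    exact hj (if_neg (by omega))
  unfold GRVertexAlgebra.jElt
  rw [hsub, hsub]
  rw [show (∑ᶠ j : ℕ, if (j : ℤ) ≤ n + p then ((-1 : ℂ) ^ (j : ℕ) * cchoose p j) •
        VA.udiamond (Usingle v k₀ (n + p - j).toNat)
          (Usingle u (n + p - j).toNat (l₀ + p).toNat) else 0).1 k l
      = evU k l (∑ᶠ j : ℕ, if (j : ℤ) ≤ n + p then ((-1 : ℂ) ^ (j : ℕ) * cchoose p j) •
        VA.udiamond (Usingle v k₀ (n + p - j).toNat)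
          (Usingle u (n + p - j).toNat (l₀ + p).toNat) else 0) from rfl,
    lmap_finsum _ _ hF1fin]
  rw [show (∑ᶠ j : ℕ, if (j : ℤ) ≤ l₀ - n + (k₀ : ℤ) + p then
        ((-1 : ℂ) ^ ((p : ℤ) - (j : ℤ)) * cchoose p j) •
          VA.udiamond (Usingle u k₀ (l₀ - n + (k₀ : ℤ) + p - j).toNat)
            (Usingle v (l₀ - n + (k₀ : ℤ) + p - j).toNat (l₀ + p).toNat) else 0).1 k l
      = evU k l (∑ᶠ j : ℕ, if (j : ℤ) ≤ l₀ - n + (k₀ : ℤ) + p then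
        ((-1 : ℂ) ^ ((p : ℤ) - (j : ℤ)) * cchoose p j) •
          VA.udiamond (Usingle u k₀ (l₀ - n + (k₀ : ℤ) + p - j).toNat)
            (Usingle v (l₀ - n + (k₀ : ℤ) + p - j).toNat (l₀ + p).toNat) else 0) from rfl,
    lmap_finsum _ _ hF2fin]
  have e1 : ∀ j : ℕ, evU (V := V) k l (if (j : ℤ) ≤ n + p then
      ((-1 : ℂ) ^ (j : ℕ) * cchoose p j) •
        VA.udiamond (Usingle v k₀ (n + p - j).toNat)
          (Usingle u (n + p - j).toNat (l₀ + p).toNat) else 0)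
      = if k = k₀ ∧ l = (l₀ + p).toNat then
          (if (j : ℤ) ≤ n + p then ((-1 : ℂ) ^ (j : ℕ) * cchoose p j) •
            VA.diamondEntry v u k₀ (n + p - j).toNat (l₀ + p).toNat else 0) else 0 := by
    intro j
    rw [apply_ite (evU (V := V) k l), map_zero, map_smul]
    rw [show evU (V := V) k l (VA.udiamond (Usingle v k₀ (n + p - j).toNat)
        (Usingle u (n + p - j).toNat (l₀ + p).toNat))
      = (VA.udiamond (Usingle v k₀ (n + p - j).toNat)
        (Usingle u (n + p - j).toNat (l₀ + p).toNat)).1 k l from rfl,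
      udiamond_single_single]
    by_cases hc : k = k₀ ∧ l = (l₀ + p).toNat
    · rcases hc with ⟨h1, h2⟩
      subst h1
      subst h2
      by_cases hj : (j : ℤ) ≤ n + p <;> simp [hj]
    · by_cases hj : (j : ℤ) ≤ n + p <;> simp [hc, hj]
  have e2 : ∀ j : ℕ, evU (V := V) k l (if (j : ℤ) ≤ l₀ - n + (k₀ : ℤ) + p then
      ((-1 : ℂ) ^ ((p : ℤ) - (j : ℤ)) * cchoose p j) •
        VA.udiamond (Usingle u k₀ (l₀ - n + (k₀ : ℤ) + p - j).toNat)
          (Usingle v (l₀ - n + (k₀ : ℤ) + p - j).toNat (l₀ + p).toNat) else 0)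
      = if k = k₀ ∧ l = (l₀ + p).toNat then
          (if (j : ℤ) ≤ l₀ - n + (k₀ : ℤ) + p then
            ((-1 : ℂ) ^ ((p : ℤ) - (j : ℤ)) * cchoose p j) •
              VA.diamondEntry u v k₀ (l₀ - n + (k₀ : ℤ) + p - j).toNat (l₀ + p).toNat
          else 0) else 0 := by
    intro j
    rw [apply_ite (evU (V := V) k l), map_zero, map_smul]
    rw [show evU (V := V) k l (VA.udiamond (Usingle u k₀ (l₀ - n + (k₀ : ℤ) + p - j).toNat)
        (Usingle v (l₀ - n + (k₀ : ℤ) + p - j).toNat (l₀ + p).toNat))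
      = (VA.udiamond (Usingle u k₀ (l₀ - n + (k₀ : ℤ) + p - j).toNat)
        (Usingle v (l₀ - n + (k₀ : ℤ) + p - j).toNat (l₀ + p).toNat)).1 k l from rfl,
      udiamond_single_single]
    by_cases hc : k = k₀ ∧ l = (l₀ + p).toNat
    · rcases hc with ⟨h1, h2⟩
      subst h1
      subst h2
      by_cases hj : (j : ℤ) ≤ l₀ - n + (k : ℤ) + p <;> simp [hj]
    · by_cases hj : (j : ℤ) ≤ l₀ - n + (k₀ : ℤ) + p <;> simp [hc, hj]
  rw [finsum_congr e1, finsum_congr e2, Usingle_entry]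
  by_cases hc : k = k₀ ∧ l = (l₀ + p).toNat
  · have hc' := hc
    have hs1 : (∑ᶠ j : ℕ, if k = k₀ ∧ l = (l₀ + p).toNat then
        (if (j : ℤ) ≤ n + p then ((-1 : ℂ) ^ (j : ℕ) * cchoose p j) •
          VA.diamondEntry v u k₀ (n + p - j).toNat (l₀ + p).toNat else 0) else 0)
        = ∑ᶠ j : ℕ, (if (j : ℤ) ≤ n + p then ((-1 : ℂ) ^ (j : ℕ) * cchoose p j) •
          VA.diamondEntry v u k₀ (n + p - j).toNat (l₀ + p).toNat else 0) :=
      finsum_congr fun j => if_pos hc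
    have hs2 : (∑ᶠ j : ℕ, if k = k₀ ∧ l = (l₀ + p).toNat then
        (if (j : ℤ) ≤ l₀ - n + (k₀ : ℤ) + p then
          ((-1 : ℂ) ^ ((p : ℤ) - (j : ℤ)) * cchoose p j) •
            VA.diamondEntry u v k₀ (l₀ - n + (k₀ : ℤ) + p - j).toNat (l₀ + p).toNat
        else 0) else 0)
        = ∑ᶠ j : ℕ, (if (j : ℤ) ≤ l₀ - n + (k₀ : ℤ) + p then
          ((-1 : ℂ) ^ ((p : ℤ) - (j : ℤ)) * cchoose p j) •
            VA.diamondEntry u v k₀ (l₀ - n + (k₀ : ℤ) + p - j).toNat (l₀ + p).toNat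
        else 0) :=
      finsum_congr fun j => if_pos hc
    rw [hs1, hs2, if_pos hc, if_pos hc]
    rfl
  · rw [if_neg hc, if_neg hc]
    have hs1 : (∑ᶠ j : ℕ, if k = k₀ ∧ l = (l₀ + p).toNat then
        (if (j : ℤ) ≤ n + p then ((-1 : ℂ) ^ (j : ℕ) * cchoose p j) •
          VA.diamondEntry v u k₀ (n + p - j).toNat (l₀ + p).toNat else 0) else 0)
        = 0 := by
      rw [finsum_congr (fun j : ℕ => if_neg hc), finsum_zero]
    have hs2 : (∑ᶠ j : ℕ, if k = k₀ ∧ l = (l₀ + p).toNat then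
        (if (j : ℤ) ≤ l₀ - n + (k₀ : ℤ) + p then
          ((-1 : ℂ) ^ ((p : ℤ) - (j : ℤ)) * cchoose p j) •
            VA.diamondEntry u v k₀ (l₀ - n + (k₀ : ℤ) + p - j).toNat (l₀ + p).toNat
        else 0) else 0) = 0 := by
      rw [finsum_congr (fun j : ℕ => if_neg hc), finsum_zero]
    rw [hs1, hs2]
    simp [hc]

end DShiftAux5
open GRVertexAlgebra in
/-- Let `V` be a grading-restricted vertex algebra.  Every element of the form `[v]_{kl}`
with `k, l ≥ 1` lying in the subspace of `U^∞(V)` generated by `O^∞(V)` and `J^∞(V)`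
satisfies the diagonal shift property, i.e. `[v]_{k-1,l-1} ∈ Q^∞(V)`. -/
theorem diagonal_shift_of_mem_span_O_J {V : Type} [AddCommGroup V] [Module ℂ V]
    (VA : GRVertexAlgebra V) (v : V) (k l : ℕ) (hk : 1 ≤ k) (hl : 1 ≤ l)
    (h : Usingle v k l ∈ Submodule.span ℂ (VA.OSet ∪ VA.JSet)) :
    VA.memQ (Usingle v (k - 1) (l - 1)) := by
  classical
  have hvZ : v ∈ Zsub VA k l := by
    have h3 : v ∈ Submodule.map (evU (V := V) k l)
        (Submodule.span ℂ (VA.OSet ∪ VA.JSet)) :=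
      ⟨Usingle v k l, h, by
        rw [show evU (V := V) k l (Usingle v k l) = (Usingle v k l).1 k l from rfl,
          Usingle_entry, if_pos ⟨rfl, rfl⟩]⟩
    rw [Submodule.map_span] at h3
    refine (Submodule.span_le.mpr ?_) h3
    rintro x ⟨A, hA, rfl⟩
    rcases hA with hO | hJ
    · have hx := hO k l
      exact (Submodule.span_le.mpr (by
        rintro y (⟨u', v', p', rfl⟩ | ⟨v', rfl⟩)
        · exact good_circ VA k l u' v' p'
        · exact good_LL VA k l v')) hx
    · obtain ⟨u', v', wtv, k₀, l₀, p, n, hv', hlp, rfl⟩ := hJ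
      show (VA.jElt u' v' wtv k₀ l₀ p n).1 k l ∈ Zsub VA k l
      rw [jElt_entry]
      by_cases hc : k = k₀ ∧ l = (l₀ + p).toNat
      · rw [if_pos hc]
        obtain ⟨rfl, hl0⟩ := hc
        exact good_jEntry VA k l u' v' wtv hv' l₀ p n (by omega)
      · rw [if_neg hc]
        exact (Zsub VA k l).zero_mem
  intro W iG iM M n' k'' w hwΩ
  letI := iG
  letI := iM
  by_cases hc : k'' = k - 1 ∧ n' = l - 1
  · obtain ⟨rfl, rfl⟩ := hc
    have hent : (Usingle v (k - 1) (l - 1)).1 (k - 1) (l - 1) = v := by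
      rw [Usingle_entry, if_pos ⟨rfl, rfl⟩]
    rw [hent]
    have hΩ' : w ∈ M.OmegaSet ((l : ℤ) - 1) := by
      have he : ((l - 1 : ℕ) : ℤ) = (l : ℤ) - 1 := by omega
      rwa [he] at hwΩ
    have hPhi := hvZ W M w hΩ'
    have hact : M.wAct v (k - 1) (l - 1) w = 0 := by
      have he : M.wAct v (k - 1) (l - 1) w = Phi M k l w v := by
        unfold LBGModule.wAct
        rw [Phi_apply]
        refine finsum_congr fun m => ?_
        rw [show ((l - 1 : ℕ) : ℤ) - ((k - 1 : ℕ) : ℤ) - 1 + m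
          = (l : ℤ) - (k : ℤ) - 1 + m from by omega]
      rw [he, hPhi]
    rw [hact]
    intro m t x _
    exact M.wmode_zero_right _ _
  · have hent : (Usingle v (k - 1) (l - 1)).1 k'' n' = 0 := by
      rw [Usingle_entry, if_neg hc]
    rw [hent]
    have hact : M.wAct (0 : V) k'' n' w = 0 := by
      unfold LBGModule.wAct
      have hz : ∀ m : ℤ, M.wmode (VA.proj m (0 : V))
          ((n' : ℤ) - (k'' : ℤ) - 1 + m) w = 0 := fun m => by
        rw [map_zero, M.wmode_zero_left]
      rw [finsum_congr hz, finsum_zero]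
    rw [hact]
    intro m t x _
    exact M.wmode_zero_right _ _
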